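/- arXiv:2206.07425 — 5 statements merged into one kernel-verified Lean document; each statement's English description precedes it below -/
import Mathlib

section
/- Consider the time-invariant single-virus layered SIWS model under Assumption A1, with initial condition x_i(0) ∈ [0,1] for all i ∈ {1,…,n} and w_j(0) ∈ [0, w_max] for all j ∈ {1,…,m}. Then for every t ≥ 0 one has x_i(t) ∈ [0,1] for all i and w_j(t) ∈ [0, w_max] for all j; that is, the set D = [0,1]^n × [0, w_max]^m is positively invariant for the dynamics. -/
open Matrix Filter

/-- Index type of the layered system: `n` population nodes plus `m` resource nodes. -/
abbrev SIdx (n m : ℕ) := Fin n ⊕ Fin m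

/-- Spectral radius of a real square matrix (largest modulus of a complex eigenvalue). -/
noncomputable def specRad {ι : Type} [Fintype ι] [DecidableEq ι] (M : Matrix ι ι ℝ) : ℝ :=
  sSup {r : ℝ | ∃ μ ∈ spectrum ℂ (M.map fun x => (x : ℂ)), r = ‖μ‖}

/-- Irreducibility of a matrix: every node can reach every other node in the associated graph. -/
def Irred {ι : Type} [Fintype ι] [DecidableEq ι] (M : Matrix ι ι ℝ) : Prop :=
  ∀ i j : ι, i ≠ j → ∃ k : ℕ, (M ^ k) i j ≠ 0

/-- The matrix `Z(z)`: diagonal of the population part of the state, zeros elsewhere. -/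
noncomputable def Zm {n m : ℕ} (z : SIdx n m → ℝ) : Matrix (SIdx n m) (SIdx n m) ℝ :=
  Matrix.diagonal (Sum.elim (fun i => z (Sum.inl i)) fun _ => (0 : ℝ))

/-- The layered infection matrix `B_f = [[B, B_w],[C_w, 0]]`. -/
noncomputable def BfM {n m : ℕ} (B : Matrix (Fin n) (Fin n) ℝ) (Bw : Matrix (Fin n) (Fin m) ℝ)
    (Cw : Matrix (Fin m) (Fin n) ℝ) : Matrix (SIdx n m) (SIdx n m) ℝ :=
  Matrix.fromBlocks B Bw Cw 0

/-- The layered healing matrix `D_f = diag(δ, δ^w)`. -/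
noncomputable def DfM {n m : ℕ} (δ : Fin n → ℝ) (δw : Fin m → ℝ) :
    Matrix (SIdx n m) (SIdx n m) ℝ :=
  Matrix.diagonal (Sum.elim δ δw)

/-- One step of the single-virus SIWS dynamics:
`z ↦ z − h (D_f − (I − Z(z)) B_f) z`. -/
noncomputable def step {n m : ℕ} (h : ℝ) (Dfm Bfm : Matrix (SIdx n m) (SIdx n m) ℝ)
    (z : SIdx n m → ℝ) : SIdx n m → ℝ :=
  z - h • ((Dfm - (1 - Zm z) * Bfm).mulVec z)

/-- The system domain `D = [0,1]^n × [0, w_max]^m`. -/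
def inD {n m : ℕ} (wmax : ℝ) (z : SIdx n m → ℝ) : Prop :=
  (∀ i : Fin n, z (Sum.inl i) ∈ Set.Icc (0 : ℝ) 1) ∧
    ∀ j : Fin m, z (Sum.inr j) ∈ Set.Icc (0 : ℝ) wmax

/-- Assumption A1 on the parameters of the single-virus SIWS model. -/
structure A1 {n m : ℕ} (h : ℝ) (δ : Fin n → ℝ) (δw : Fin m → ℝ)
    (B : Matrix (Fin n) (Fin n) ℝ) (Bw : Matrix (Fin n) (Fin m) ℝ)
    (Cw : Matrix (Fin m) (Fin n) ℝ) (wmax : ℝ) : Prop where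
  h_pos : 0 < h
  delta_pos : ∀ i, 0 < δ i
  deltaw_pos : ∀ j, 0 < δw j
  B_nonneg : ∀ i j, 0 ≤ B i j
  Bw_nonneg : ∀ i j, 0 ≤ Bw i j
  Cw_nonneg : ∀ j k, 0 ≤ Cw j k
  Cw_row_pos : ∀ j, ∃ k, 0 < Cw j k
  wmax_pos : 0 < wmax
  ratio_mem : ∀ j, (∑ k, Cw j k) / δw j ∈ Set.Icc (0 : ℝ) wmax
  h_delta : ∀ i, h * δ i ∈ Set.Ioc (0 : ℝ) 1
  h_deltaw : ∀ j, h * δw j ∈ Set.Ioc (0 : ℝ) 1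
  h_beta : ∀ i, h * ((∑ j, B i j) + ∑ j, Bw i j * wmax) ∈ Set.Icc (0 : ℝ) 1

/-- Assumption A3: `h(δ_i + Σ_j β_{ij} + Σ_j β^w_{ij} w_max) ∈ [0,1]` for all `i`. -/
def A3 {n m : ℕ} (h : ℝ) (δ : Fin n → ℝ) (B : Matrix (Fin n) (Fin n) ℝ)
    (Bw : Matrix (Fin n) (Fin m) ℝ) (wmax : ℝ) : Prop :=
  ∀ i, h * (δ i + (∑ j, B i j) + ∑ j, Bw i j * wmax) ∈ Set.Icc (0 : ℝ) 1

open Set Finset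

/-! One step of the dynamics moves each coordinate to a point of its interval: with `a = h δ_i`
and `b = h (B x + B_w w)_i` in `[0,1]`, the infection level becomes `(1 - a) x_i + (1 - x_i) b`;
with `a = h δ^w_j`, the resource level becomes `(1 - a) w_j + h (C_w x)_j`, where
`h (C_w x)_j ≤ a w_max` because `Σ_k c^w_{jk} ≤ δ^w_j w_max`. -/

lemma infection_update_mem_Icc {a b x : ℝ} (ha : a ∈ Icc (0 : ℝ) 1) (hb : b ∈ Icc (0 : ℝ) 1)
    (hx : x ∈ Icc (0 : ℝ) 1) : (1 - a) * x + (1 - x) * b ∈ Icc (0 : ℝ) 1 := by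
  obtain ⟨ha0, ha1⟩ := ha
  obtain ⟨hb0, hb1⟩ := hb
  obtain ⟨hx0, hx1⟩ := hx
  constructor <;> nlinarith [mul_nonneg ha0 hx0, mul_nonneg (sub_nonneg.2 hx1) (sub_nonneg.2 hb1)]

lemma resource_update_mem_Icc {a c w M : ℝ} (ha : a ∈ Icc (0 : ℝ) 1) (hc : c ∈ Icc 0 (a * M))
    (hw : w ∈ Icc 0 M) : (1 - a) * w + c ∈ Icc 0 M := by
  obtain ⟨ha0, ha1⟩ := ha
  obtain ⟨hc0, hc1⟩ := hc
  obtain ⟨hw0, hw1⟩ := hw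
  constructor <;>
    nlinarith [mul_nonneg (sub_nonneg.2 ha1) hw0, mul_le_mul_of_nonneg_left hw1 (sub_nonneg.2 ha1)]

lemma sum_mul_mem_Icc {ι : Type*} (s : Finset ι) {c y : ι → ℝ} {M : ℝ} (hc : ∀ k, 0 ≤ c k)
    (hy : ∀ k, y k ∈ Icc 0 M) : ∑ k ∈ s, c k * y k ∈ Icc 0 (∑ k ∈ s, c k * M) :=
  ⟨sum_nonneg fun k _ => mul_nonneg (hc k) (hy k).1,
    sum_le_sum fun k _ => mul_le_mul_of_nonneg_left (hy k).2 (hc k)⟩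

section SIWS

variable {n m : ℕ} {h wmax : ℝ} {δ : Fin n → ℝ} {δw : Fin m → ℝ} {B : Matrix (Fin n) (Fin n) ℝ}
  {Bw : Matrix (Fin n) (Fin m) ℝ} {Cw : Matrix (Fin m) (Fin n) ℝ} {z : SIdx n m → ℝ}

lemma one_sub_Zm :
    (1 - Zm z : Matrix (SIdx n m) (SIdx n m) ℝ)
      = Matrix.diagonal fun k => 1 - Sum.elim (fun i => z (Sum.inl i)) (fun _ => (0 : ℝ)) k := by
  rw [Zm, ← Matrix.diagonal_one, Matrix.diagonal_sub]

lemma step_apply_inl (i : Fin n) :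
    step h (DfM δ δw) (BfM B Bw Cw) z (Sum.inl i)
      = z (Sum.inl i) - h * (δ i * z (Sum.inl i)
        - (1 - z (Sum.inl i)) * ((∑ j, B i j * z (Sum.inl j)) + ∑ j, Bw i j * z (Sum.inr j))) := by
  simp only [step, DfM, BfM, one_sub_Zm, sub_mulVec, ← mulVec_mulVec, Pi.sub_apply, Pi.smul_apply,
    smul_eq_mul, mulVec_diagonal, fromBlocks_mulVec, Sum.elim_inl, Pi.add_apply, Function.comp_def]
  simp [mulVec, dotProduct]

lemma step_apply_inr (j : Fin m) :
    step h (DfM δ δw) (BfM B Bw Cw) z (Sum.inr j)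
      = z (Sum.inr j) - h * (δw j * z (Sum.inr j) - ∑ k, Cw j k * z (Sum.inl k)) := by
  simp only [step, DfM, BfM, one_sub_Zm, sub_mulVec, ← mulVec_mulVec, Pi.sub_apply, Pi.smul_apply,
    smul_eq_mul, mulVec_diagonal, fromBlocks_mulVec, Sum.elim_inr, Pi.add_apply, Function.comp_def]
  simp [mulVec, dotProduct]

namespace A1

variable (hA1 : A1 h δ δw B Bw Cw wmax) (hz : inD wmax z)
include hA1 hz

lemma step_inl_mem_Icc (i : Fin n) :
    step h (DfM δ δw) (BfM B Bw Cw) z (Sum.inl i) ∈ Icc (0 : ℝ) 1 := by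
  set s := (∑ j, B i j * z (Sum.inl j)) + ∑ j, Bw i j * z (Sum.inr j)
  have hs : s ∈ Icc 0 ((∑ j, B i j) + ∑ j, Bw i j * wmax) := by
    have hB := sum_mul_mem_Icc univ (hA1.B_nonneg i) hz.1
    have hBw := sum_mul_mem_Icc univ (hA1.Bw_nonneg i) hz.2
    simp only [mul_one] at hB
    exact ⟨add_nonneg hB.1 hBw.1, add_le_add hB.2 hBw.2⟩
  have hhs : h * s ∈ Icc (0 : ℝ) 1 :=
    ⟨mul_nonneg hA1.h_pos.le hs.1,
      (mul_le_mul_of_nonneg_left hs.2 hA1.h_pos.le).trans (hA1.h_beta i).2⟩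
  rw [step_apply_inl, show ∀ x : ℝ, x - h * (δ i * x - (1 - x) * s)
      = (1 - h * δ i) * x + (1 - x) * (h * s) from fun x => by ring]
  exact infection_update_mem_Icc (Ioc_subset_Icc_self (hA1.h_delta i)) hhs (hz.1 i)

lemma step_inr_mem_Icc (j : Fin m) :
    step h (DfM δ δw) (BfM B Bw Cw) z (Sum.inr j) ∈ Icc 0 wmax := by
  set c := ∑ k, Cw j k * z (Sum.inl k)
  have hc : c ∈ Icc 0 (δw j * wmax) := by
    have hCw := sum_mul_mem_Icc univ (hA1.Cw_nonneg j) hz.1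
    simp only [mul_one] at hCw
    have hratio := (div_le_iff₀' (hA1.deltaw_pos j)).1 (hA1.ratio_mem j).2
    exact ⟨hCw.1, hCw.2.trans hratio⟩
  have hhc : h * c ∈ Icc 0 (h * δw j * wmax) := by
    rw [mul_assoc]
    exact ⟨mul_nonneg hA1.h_pos.le hc.1, mul_le_mul_of_nonneg_left hc.2 hA1.h_pos.le⟩
  rw [step_apply_inr, show ∀ w : ℝ, w - h * (δw j * w - c) = (1 - h * δw j) * w + h * c
      from fun w => by ring]
  exact resource_update_mem_Icc (Ioc_subset_Icc_self (hA1.h_deltaw j)) hhc (hz.2 j)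

lemma step_mem_inD : inD wmax (step h (DfM δ δw) (BfM B Bw Cw) z) :=
  ⟨hA1.step_inl_mem_Icc hz, hA1.step_inr_mem_Icc hz⟩

end A1

end SIWS

/-- positive invariance of `D = [0,1]^n × [0,w_max]^m` for the time-invariant
single-virus layered SIWS model under Assumption A1. -/
theorem stmt0 {n m : ℕ} (h wmax : ℝ) (δ : Fin n → ℝ) (δw : Fin m → ℝ)
    (B : Matrix (Fin n) (Fin n) ℝ) (Bw : Matrix (Fin n) (Fin m) ℝ)
    (Cw : Matrix (Fin m) (Fin n) ℝ)
    (hA1 : A1 h δ δw B Bw Cw wmax)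
    (z : ℕ → SIdx n m → ℝ)
    (hdyn : ∀ t, z (t + 1) = step h (DfM δ δw) (BfM B Bw Cw) (z t))
    (hinit : inD wmax (z 0)) :
    ∀ t, inD wmax (z t) := by
  intro t
  induction t with
  | zero => exact hinit
  | succ t ih => exact hdyn t ▸ hA1.step_mem_inD ih
end

section
/- Consider the time-invariant single-virus layered SIWS model under Assumptions A1 and A2. If ρ(I − hD_f + hB_f) > 1, then the model has exactly two equilibria in D: the healthy state 0 and an endemic equilibrium z* with all entries strictly positive. Consequently, the healthy state is the unique equilibrium in D if and only if ρ(I − hD_f + hB_f) ≤ 1. -/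
open Matrix Filter

/-!
The linearisation of the step map at the healthy state is `A = I − hD_f + hB_f`, an irreducible
nonnegative matrix, so by Perron–Frobenius (proved via the Collatz–Wielandt maximum) `ρ(A)` is an
eigenvalue with a positive eigenvector `v`. Equilibria in `D` are the fixed points of the monotone
map `x_i ↦ b_i / (δ_i + b_i)`, `w_j ↦ b_j / δ^w_j` with `b = B_f z`. If `ρ(A) > 1`, a small
multiple of `v` lies below its image, and Knaster–Tarski on the order interval between it and the
top corner of `D` gives a positive fixed point. Irreducibility makes every nonzero equilibrium
positive, and strict subhomogeneity of the map forces two positive fixed points to coincide.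
Conversely, at a nonzero equilibrium `A z = z + h Z(z) B_f z` exceeds `z` at the population nodes,
so the strict Collatz–Wielandt inequality gives `ρ(A) > 1`.
-/

open Finset Topology

namespace Matrix

lemma one_add_apply_nonneg {ι : Type} [DecidableEq ι] {A : Matrix ι ι ℝ}
    (hA0 : ∀ i j, 0 ≤ A i j) (i j : ι) : 0 ≤ (1 + A) i j := by
  rw [Matrix.add_apply, one_apply]
  split_ifs <;> linarith [hA0 i j]

section Nonneg

variable {ι : Type} [Fintype ι] {A : Matrix ι ι ℝ}

lemma mulVec_nonneg (hA : ∀ i j, 0 ≤ A i j) {x : ι → ℝ} (hx : 0 ≤ x) : 0 ≤ A *ᵥ x :=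
  fun i => sum_nonneg fun j _ => mul_nonneg (hA i j) (hx j)

lemma mulVec_mono (hA : ∀ i j, 0 ≤ A i j) {x y : ι → ℝ} (hxy : x ≤ y) : A *ᵥ x ≤ A *ᵥ y :=
  fun i => sum_le_sum fun j _ => mul_le_mul_of_nonneg_left (hxy j) (hA i j)

lemma apply_mul_le_mulVec (hA : ∀ i j, 0 ≤ A i j) {x : ι → ℝ} (hx : 0 ≤ x) (i j : ι) :
    A i j * x j ≤ (A *ᵥ x) i :=
  single_le_sum (f := fun j => A i j * x j) (fun j _ => mul_nonneg (hA i j) (hx j)) (mem_univ j)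

end Nonneg

section Pow

variable {ι : Type} [Fintype ι] [DecidableEq ι] {A : Matrix ι ι ℝ}

lemma pow_apply_mono {B : Matrix ι ι ℝ} (hA : ∀ i j, 0 ≤ A i j) (hAB : ∀ i j, A i j ≤ B i j)
    (k : ℕ) (i j : ι) : (A ^ k) i j ≤ (B ^ k) i j := by
  induction k generalizing j with
  | zero => rfl
  | succ k ih =>
    rw [pow_succ, pow_succ, mul_apply, mul_apply]
    exact sum_le_sum fun l _ =>
      mul_le_mul (ih l) (hAB l j) (hA l j) ((pow_apply_nonneg hA k i l).trans (ih l))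

end Pow

lemma mem_spectrum_iff_exists_mulVec_eq_smul {ι K : Type} [Fintype ι] [DecidableEq ι] [Field K]
    (M : Matrix ι ι K) (μ : K) : μ ∈ spectrum K M ↔ ∃ v ≠ 0, M *ᵥ v = μ • v := by
  rw [spectrum.mem_iff, Algebra.algebraMap_eq_smul_one, isUnit_iff_isUnit_det, isUnit_iff_ne_zero,
    not_not, ← exists_mulVec_eq_zero_iff]
  simp only [sub_mulVec, smul_mulVec, one_mulVec, sub_eq_zero, eq_comm]

end Matrix

section Irreducible

variable {ι : Type} [Fintype ι] [DecidableEq ι] {A : Matrix ι ι ℝ}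

theorem Irred.smul (hA : Irred A) {c : ℝ} (hc : c ≠ 0) : Irred (c • A) := fun i j hij => by
  obtain ⟨k, hk⟩ := hA i j hij
  exact ⟨k, by simpa [smul_pow] using And.intro (pow_ne_zero k hc) hk⟩

theorem Irred.mono {B : Matrix ι ι ℝ} (hA : Irred A) (hA0 : ∀ i j, 0 ≤ A i j)
    (hAB : ∀ i j, A i j ≤ B i j) : Irred B := fun i j hij => by
  obtain ⟨k, hk⟩ := hA i j hij
  exact ⟨k, ((lt_of_le_of_ne (Matrix.pow_apply_nonneg hA0 k i j) (Ne.symm hk)).trans_le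
    (Matrix.pow_apply_mono hA0 hAB k i j)).ne'⟩

theorem Irred.exists_pos_apply (hA : Irred A) (hA0 : ∀ i j, 0 ≤ A i j) {S : Finset ι}
    (hS : S.Nonempty) (hSU : S ≠ univ) : ∃ i ∉ S, ∃ j ∈ S, 0 < A i j := by
  by_contra! hcon
  have hpow : ∀ k, ∀ i ∉ S, ∀ j ∈ S, (A ^ k) i j = 0 := by
    intro k
    induction k with
    | zero => exact fun i hi j hj => Matrix.one_apply_ne (ne_of_mem_of_not_mem hj hi).symm
    | succ k ih =>
      intro i hi j hj
      rw [pow_succ', Matrix.mul_apply]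
      refine sum_eq_zero fun l _ => ?_
      by_cases hl : l ∈ S
      · rw [le_antisymm (hcon i hi l hl) (hA0 i l), zero_mul]
      · rw [ih l hl j hj, mul_zero]
  obtain ⟨i, hi⟩ : ∃ i, i ∉ S := by simpa [eq_univ_iff_forall] using hSU
  obtain ⟨j, hj⟩ := hS
  obtain ⟨k, hk⟩ := hA i j (ne_of_mem_of_not_mem hj hi).symm
  exact hk (hpow k i hi j hj)

end Irreducible

section PositiveSupport

variable {ι : Type} [Fintype ι]

noncomputable def posSupport (x : ι → ℝ) : Finset ι := univ.filter (0 < x ·)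

@[simp]
lemma mem_posSupport {x : ι → ℝ} {i : ι} : i ∈ posSupport x ↔ 0 < x i := by
  simp [posSupport]

lemma posSupport_eq_univ {x : ι → ℝ} : posSupport x = univ ↔ ∀ i, 0 < x i := by
  simp [eq_univ_iff_forall]

lemma posSupport_nonempty {x : ι → ℝ} (hx : 0 ≤ x) (hx0 : x ≠ 0) : (posSupport x).Nonempty := by
  obtain ⟨j, hj⟩ := Function.ne_iff.1 hx0
  exact ⟨j, mem_posSupport.2 ((hx j).lt_of_ne' hj)⟩

variable [DecidableEq ι] {A : Matrix ι ι ℝ}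

lemma le_one_add_mulVec (hA0 : ∀ i j, 0 ≤ A i j) {x : ι → ℝ} (hx : 0 ≤ x) :
    x ≤ (1 + A) *ᵥ x := by
  rw [add_mulVec, one_mulVec]
  exact le_add_of_nonneg_right (mulVec_nonneg hA0 hx)

lemma Irred.posSupport_ssubset (hA : Irred A) (hA0 : ∀ i j, 0 ≤ A i j) {x : ι → ℝ}
    (hx : 0 ≤ x) (hne : (posSupport x).Nonempty) (hU : posSupport x ≠ univ) :
    posSupport x ⊂ posSupport ((1 + A) *ᵥ x) := by
  have hle := le_one_add_mulVec hA0 hx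
  obtain ⟨i, hi, j, hj, hij⟩ := hA.exists_pos_apply hA0 hne hU
  refine ssubset_iff_of_subset (fun k hk => ?_) |>.2 ⟨i, ?_, hi⟩
  · exact mem_posSupport.2 ((mem_posSupport.1 hk).trans_le (hle k))
  · rw [mem_posSupport]
    calc 0 < A i j * x j := mul_pos hij (mem_posSupport.1 hj)
      _ ≤ (A *ᵥ x) i := apply_mul_le_mulVec hA0 hx i j
      _ ≤ ((1 + A) *ᵥ x) i := by
        rw [add_mulVec, one_mulVec]; exact le_add_of_nonneg_left (hx i)

lemma Irred.min_le_card_posSupport (hA : Irred A) (hA0 : ∀ i j, 0 ≤ A i j) {x : ι → ℝ}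
    (hx : 0 ≤ x) (hne : (posSupport x).Nonempty) (k : ℕ) :
    min (k + 1) (Fintype.card ι) ≤ #(posSupport ((1 + A) ^ k *ᵥ x)) := by
  induction k with
  | zero => simpa using Or.inl (card_pos.2 hne)
  | succ k ih =>
    set y := (1 + A) ^ k *ᵥ x
    have hy : 0 ≤ y := mulVec_nonneg (pow_apply_nonneg (one_add_apply_nonneg hA0) k) hx
    rw [pow_succ', ← mulVec_mulVec]
    change _ ≤ #(posSupport ((1 + A) *ᵥ y))
    by_cases hU : posSupport y = univ
    · rw [posSupport_eq_univ.2 fun i =>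
        (posSupport_eq_univ.1 hU i).trans_le (le_one_add_mulVec hA0 hy i), card_univ]
      exact min_le_right _ _
    · have hcard_pos : 0 < #(posSupport y) := by
        have : 0 < Fintype.card ι := Fintype.card_pos_iff.2 ⟨hne.choose⟩
        omega
      have := card_lt_card (hA.posSupport_ssubset hA0 hy (card_pos.1 hcard_pos) hU)
      omega

lemma Irred.one_add_pow_mulVec_pos (hA : Irred A) (hA0 : ∀ i j, 0 ≤ A i j) {x : ι → ℝ}
    (hx : 0 ≤ x) (hx0 : x ≠ 0) (i : ι) : 0 < ((1 + A) ^ (Fintype.card ι - 1) *ᵥ x) i := by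
  have hcard := hA.min_le_card_posSupport hA0 hx (posSupport_nonempty hx hx0) (Fintype.card ι - 1)
  refine posSupport_eq_univ.1 (eq_univ_of_card _ (le_antisymm (card_le_univ _) ?_)) i
  have : 0 < Fintype.card ι := Fintype.card_pos_iff.2 ⟨i⟩
  omega

end PositiveSupport

lemma exists_gt_mul_le {ι : Type} [Finite ι] {θ : ℝ} {y z : ι → ℝ} (h : ∀ i, θ * y i < z i) :
    ∃ t > θ, ∀ i, t * y i ≤ z i := by
  have hev : ∀ᶠ t in 𝓝[>] θ, ∀ i, t * y i < z i := eventually_all.2 fun i =>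
    nhdsWithin_le_nhds <|
      (continuous_mul_const (y i)).continuousAt.eventually_lt continuousAt_const (h i)
  obtain ⟨t, ht, hθt⟩ := (hev.and self_mem_nhdsWithin).exists
  exact ⟨t, hθt, fun i => (ht i).le⟩

section CollatzWielandt

variable {ι : Type} [Fintype ι] {A : Matrix ι ι ℝ}

lemma exists_max_collatzWielandt (hA0 : ∀ i j, 0 ≤ A i j) [Nonempty ι] :
    ∃ r : ℝ, 0 ≤ r ∧ ∃ x : ι → ℝ, 0 ≤ x ∧ x ≠ 0 ∧ r • x ≤ A *ᵥ x ∧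
      ∀ θ (y : ι → ℝ), 0 ≤ y → y ≠ 0 → θ • y ≤ A *ᵥ y → θ ≤ r := by
  set Ω : Set (ℝ × (ι → ℝ)) := {p | 0 ≤ p.1} ∩ {p | 0 ≤ p.2} ∩ {p | ∑ i, p.2 i = 1} ∩
    {p | p.1 • p.2 ≤ A *ᵥ p.2}
  have hle_one : ∀ p ∈ Ω, p.2 ≤ 1 := fun p hp i =>
    (single_le_sum (fun j _ => hp.1.1.2 j) (mem_univ i)).trans_eq hp.1.2
  have hbound : ∀ p ∈ Ω, p.1 ≤ ∑ i, ∑ j, A i j := fun p hp =>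
    calc p.1 = ∑ i, p.1 * p.2 i := by rw [← mul_sum, hp.1.2, mul_one]
      _ ≤ ∑ i, (A *ᵥ p.2) i := sum_le_sum fun i _ => hp.2 i
      _ ≤ ∑ i, ∑ j, A i j := sum_le_sum fun i _ => sum_le_sum fun j _ =>
          mul_le_of_le_one_right (hA0 i j) (hle_one p hp j)
  have hΩ : IsCompact Ω := by
    refine (isCompact_Icc.prod isCompact_Icc).of_isClosed_subset ?_
      (fun p hp => ⟨⟨hp.1.1.1, hbound p hp⟩, hp.1.1.2, hle_one p hp⟩)
    refine (((isClosed_le continuous_const continuous_fst).inter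
      (isClosed_le continuous_const continuous_snd)).inter
      (isClosed_eq (by fun_prop) continuous_const)).inter (isClosed_le (by fun_prop) ?_)
    exact (Continuous.matrix_mulVec continuous_const continuous_snd)
  have hcard : (0 : ℝ) < Fintype.card ι := Nat.cast_pos.2 Fintype.card_pos
  have hΩne : ((0 : ℝ), fun _ => ((Fintype.card ι : ℝ))⁻¹) ∈ Ω :=
    ⟨⟨⟨le_refl (0 : ℝ), fun _ => by positivity⟩, by simp [hcard.ne']⟩,
      by simpa using mulVec_nonneg hA0 fun _ => by positivity⟩
  obtain ⟨p, hp, hmax⟩ := hΩ.exists_isMaxOn ⟨_, hΩne⟩ continuous_fst.continuousOn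
  refine ⟨p.1, hp.1.1.1, p.2, hp.1.1.2, fun h0 => by simpa [h0] using hp.1.2, hp.2,
    fun θ y hy hy0 hθy => ?_⟩
  rcases lt_or_ge θ 0 with hθ | hθ
  · exact hθ.le.trans hp.1.1.1
  have hs : 0 < ∑ i, y i := by
    obtain ⟨j, hj⟩ := Function.ne_iff.1 hy0
    exact sum_pos' (fun i _ => hy i) ⟨j, mem_univ j, (hy j).lt_of_ne' hj⟩
  refine hmax (a := (θ, (∑ i, y i)⁻¹ • y))
    ⟨⟨⟨hθ, smul_nonneg (inv_nonneg.2 hs.le) hy⟩, ?_⟩, ?_⟩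
  · simp [← mul_sum, hs.ne']
  · change θ • (∑ i, y i)⁻¹ • y ≤ A *ᵥ ((∑ i, y i)⁻¹ • y)
    rw [mulVec_smul, smul_comm]
    exact smul_le_smul_of_nonneg_left hθy (inv_nonneg.2 hs.le)

end CollatzWielandt

section PerronFrobenius

variable {ι : Type} [Fintype ι] [DecidableEq ι] {A : Matrix ι ι ℝ}

/-- Strict Collatz–Wielandt inequality: `(1 + A)^(N-1)` turns a non-sharp subsolution
into a strict one, which still admits a slightly larger `θ`. -/
lemma Irred.lt_of_smul_le_mulVec (hA : Irred A) (hA0 : ∀ i j, 0 ≤ A i j) {r : ℝ}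
    (hr : ∀ θ (y : ι → ℝ), 0 ≤ y → y ≠ 0 → θ • y ≤ A *ᵥ y → θ ≤ r)
    {θ : ℝ} {x : ι → ℝ} (hx : 0 ≤ x) (hle : θ • x ≤ A *ᵥ x) (hne : θ • x ≠ A *ᵥ x) :
    θ < r := by
  set P := (1 + A) ^ (Fintype.card ι - 1)
  have hx0 : x ≠ 0 := by rintro rfl; simp at hne
  have hPx := hA.one_add_pow_mulVec_pos hA0 hx hx0
  have hPw := hA.one_add_pow_mulVec_pos hA0 (sub_nonneg.2 hle) (sub_ne_zero.2 hne.symm)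
  have hcomm : A * P = P * A :=
    (((Commute.one_right A).add_right (Commute.refl A)).pow_right _).eq
  have hstrict : ∀ i, θ * (P *ᵥ x) i < (A *ᵥ (P *ᵥ x)) i := fun i => by
    have : A *ᵥ (P *ᵥ x) = θ • (P *ᵥ x) + P *ᵥ (A *ᵥ x - θ • x) := by
      rw [mulVec_mulVec, hcomm, ← mulVec_mulVec, mulVec_sub, mulVec_smul]
      abel
    rw [this]
    simpa using hPw i
  obtain ⟨t, hθt, ht⟩ := exists_gt_mul_le hstrict
  obtain ⟨j, -⟩ := Function.ne_iff.1 hx0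
  exact hθt.trans_le (hr t _ (fun i => (hPx i).le) (Function.ne_iff.2 ⟨j, (hPx j).ne'⟩) ht)

lemma norm_le_of_mem_spectrum (hA0 : ∀ i j, 0 ≤ A i j) {r : ℝ}
    (hr : ∀ θ (y : ι → ℝ), 0 ≤ y → y ≠ 0 → θ • y ≤ A *ᵥ y → θ ≤ r) {μ : ℂ}
    (hμ : μ ∈ spectrum ℂ (A.map fun x => (x : ℂ))) : ‖μ‖ ≤ r := by
  obtain ⟨v, hv, hμv⟩ := (mem_spectrum_iff_exists_mulVec_eq_smul _ μ).1 hμ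
  refine hr _ (fun i => ‖v i‖) (fun i => norm_nonneg _) (fun h0 => hv (funext fun i => ?_))
    fun i => ?_
  · simpa using congrFun h0 i
  calc ‖μ‖ * ‖v i‖ = ‖((A.map fun x => (x : ℂ)) *ᵥ v) i‖ := by rw [hμv]; simp
    _ ≤ ∑ j, ‖(A i j : ℂ) * v j‖ := norm_sum_le _ _
    _ = (A *ᵥ fun i => ‖v i‖) i := by
      simp [mulVec, dotProduct, abs_of_nonneg (hA0 i _)]

lemma ofReal_mem_spectrum_map {r : ℝ} {v : ι → ℝ} (hv : v ≠ 0) (hrv : A *ᵥ v = r • v) :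
    (r : ℂ) ∈ spectrum ℂ (A.map fun x => (x : ℂ)) := by
  refine (mem_spectrum_iff_exists_mulVec_eq_smul _ _).2
    ⟨fun i => v i, fun h0 => hv (funext fun i => by simpa using congrFun h0 i), funext fun i => ?_⟩
  have := congrArg (fun w => (w i : ℂ)) hrv
  simpa [mulVec, dotProduct] using this

theorem Irred.perron_frobenius (hA : Irred A) (hA0 : ∀ i j, 0 ≤ A i j) [Nonempty ι] :
    ∃ v : ι → ℝ, (∀ i, 0 < v i) ∧ A *ᵥ v = specRad A • v ∧
      ∀ θ (x : ι → ℝ), 0 ≤ x → θ • x ≤ A *ᵥ x → θ • x ≠ A *ᵥ x → θ < specRad A := by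
  obtain ⟨r, hr0, x, hx, hx0, hrx, hr⟩ := exists_max_collatzWielandt hA0
  have heig : A *ᵥ x = r • x := by
    by_contra hne
    exact (hA.lt_of_smul_le_mulVec hA0 hr hx hrx (Ne.symm hne)).false
  have hspec : specRad A = r := by
    refine IsGreatest.csSup_eq ⟨⟨r, ofReal_mem_spectrum_map hx0 heig, ?_⟩, ?_⟩
    · simp [abs_of_nonneg hr0]
    · rintro _ ⟨μ, hμ, rfl⟩
      exact norm_le_of_mem_spectrum hA0 hr hμ
  have h1 : (1 + A) *ᵥ x = (1 + r) • x := by rw [add_mulVec, one_mulVec, heig, add_smul, one_smul]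
  have hpow : ∀ k, (1 + A) ^ k *ᵥ x = (1 + r) ^ k • x := by
    intro k
    induction k with
    | zero => simp
    | succ k ih => rw [pow_succ, ← mulVec_mulVec, h1, mulVec_smul, ih, smul_smul, pow_succ']
  refine hspec ▸ ⟨x, fun i => ?_, heig,
    fun θ y hy hle hne => hA.lt_of_smul_le_mulVec hA0 hr hy hle hne⟩
  have hPx := hA.one_add_pow_mulVec_pos hA0 hx hx0 i
  rw [hpow, Pi.smul_apply, smul_eq_mul] at hPx
  exact pos_of_mul_pos_right hPx (by positivity)

end PerronFrobenius

lemma nonempty_of_pos_specRad {ι : Type} [Fintype ι] [DecidableEq ι] {A : Matrix ι ι ℝ}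
    (hA : 0 < specRad A) : Nonempty ι := by
  by_contra hι
  rw [not_nonempty_iff] at hι
  simp [specRad] at hA

namespace SIWS

variable {n m : ℕ} {h wmax : ℝ} {δ : Fin n → ℝ} {δw : Fin m → ℝ}
  {B : Matrix (Fin n) (Fin n) ℝ} {Bw : Matrix (Fin n) (Fin m) ℝ} {Cw : Matrix (Fin m) (Fin n) ℝ}

/-- The linearisation of the step map at the healthy state. -/
noncomputable abbrev linMat (h : ℝ) (δ : Fin n → ℝ) (δw : Fin m → ℝ)
    (B : Matrix (Fin n) (Fin n) ℝ) (Bw : Matrix (Fin n) (Fin m) ℝ) (Cw : Matrix (Fin m) (Fin n) ℝ) :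
    Matrix (SIdx n m) (SIdx n m) ℝ :=
  1 - h • DfM δ δw + h • BfM B Bw Cw

def popPart (z : SIdx n m → ℝ) : SIdx n m → ℝ := Sum.elim (fun i => z (.inl i)) fun _ => 0

def upperCorner (wmax : ℝ) : SIdx n m → ℝ := Sum.elim 1 fun _ => wmax

/-- The equilibrium equations `D_f z = (I − Z(z)) B_f z`. -/
def IsEquilibrium (δ : Fin n → ℝ) (δw : Fin m → ℝ) (B : Matrix (Fin n) (Fin n) ℝ)
    (Bw : Matrix (Fin n) (Fin m) ℝ) (Cw : Matrix (Fin m) (Fin n) ℝ) (z : SIdx n m → ℝ) : Prop :=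
  ∀ p, Sum.elim δ δw p * z p = (1 - popPart z p) * (BfM B Bw Cw *ᵥ z) p

/-- The equilibrium equations solved for `z` in terms of `b = B_f z`:
`x_i = b_i / (δ_i + b_i)` and `w_j = b_j / δ^w_j`. -/
noncomputable def equilibriumMap (δ : Fin n → ℝ) (δw : Fin m → ℝ) (B : Matrix (Fin n) (Fin n) ℝ)
    (Bw : Matrix (Fin n) (Fin m) ℝ) (Cw : Matrix (Fin m) (Fin n) ℝ) (z : SIdx n m → ℝ) :
    SIdx n m → ℝ :=
  Sum.elim (fun i => (BfM B Bw Cw *ᵥ z) (.inl i) / (δ i + (BfM B Bw Cw *ᵥ z) (.inl i)))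
    fun j => (BfM B Bw Cw *ᵥ z) (.inr j) / δw j

lemma step_eq_self_iff (hh : h ≠ 0) (z : SIdx n m → ℝ) :
    step h (DfM δ δw) (BfM B Bw Cw) z = z ↔ IsEquilibrium δ δw B Bw Cw z := by
  have h1 : (1 : Matrix (SIdx n m) (SIdx n m) ℝ) - Zm z = diagonal (1 - popPart z) := by
    rw [← diagonal_one, Zm, diagonal_sub]
    rfl
  rw [step, sub_eq_self, smul_eq_zero, or_iff_right hh, sub_mulVec, ← mulVec_mulVec, h1, DfM,
    funext_iff]
  simp only [Pi.sub_apply, mulVec_diagonal, Pi.one_apply, Pi.zero_apply, sub_eq_zero,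
    IsEquilibrium]

lemma inD_iff {z : SIdx n m → ℝ} : inD wmax z ↔ 0 ≤ z ∧ z ≤ upperCorner wmax := by
  simp only [inD, Set.mem_Icc, forall_and, Pi.le_def, Pi.zero_apply, Sum.forall, upperCorner,
    Sum.elim_inl, Pi.one_apply, Sum.elim_inr]
  tauto

lemma bfM_nonneg (hA1 : A1 h δ δw B Bw Cw wmax) (p q : SIdx n m) : 0 ≤ BfM B Bw Cw p q := by
  rcases p with i | j <;> rcases q with k | l
  exacts [hA1.B_nonneg i k, hA1.Bw_nonneg i l, hA1.Cw_nonneg j k, le_rfl]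

lemma bfM_mulVec_inr (z : SIdx n m → ℝ) (j : Fin m) :
    (BfM B Bw Cw *ᵥ z) (.inr j) = ∑ k, Cw j k * z (.inl k) := by
  simp [BfM, mulVec, dotProduct, Fintype.sum_sum_type]

lemma isEquilibrium_iff_equilibriumMap_eq (hA1 : A1 h δ δw B Bw Cw wmax) {z : SIdx n m → ℝ}
    (hz : 0 ≤ z) : IsEquilibrium δ δw B Bw Cw z ↔ equilibriumMap δ δw B Bw Cw z = z := by
  have hb : ∀ p, 0 ≤ (BfM B Bw Cw *ᵥ z) p := mulVec_nonneg (bfM_nonneg hA1) hz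
  rw [IsEquilibrium, funext_iff, Sum.forall, Sum.forall]
  refine and_congr (forall_congr' fun i => ?_) (forall_congr' fun j => ?_)
  · have := hA1.delta_pos i
    simp only [equilibriumMap, Sum.elim_inl, popPart]
    rw [div_eq_iff (by linarith [hb (.inl i)])]
    constructor <;> intro he <;> linarith
  · simp only [equilibriumMap, Sum.elim_inr, popPart]
    rw [div_eq_iff (hA1.deltaw_pos j).ne']
    constructor <;> intro he <;> linarith

lemma equilibriumMap_mono (hA1 : A1 h δ δw B Bw Cw wmax) {z z' : SIdx n m → ℝ} (hz : 0 ≤ z)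
    (hzz' : z ≤ z') : equilibriumMap δ δw B Bw Cw z ≤ equilibriumMap δ δw B Bw Cw z' := by
  have hb : ∀ p, 0 ≤ (BfM B Bw Cw *ᵥ z) p := mulVec_nonneg (bfM_nonneg hA1) hz
  have hbb' := mulVec_mono (bfM_nonneg hA1) hzz'
  rintro (i | j)
  · have := hA1.delta_pos i
    have := hb (.inl i)
    have := hbb' (.inl i)
    simp only [equilibriumMap, Sum.elim_inl]
    rw [div_le_div_iff₀ (by linarith) (by linarith)]
    nlinarith
  · exact div_le_div_of_nonneg_right (hbb' _) (hA1.deltaw_pos j).le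

lemma equilibriumMap_le_upperCorner (hA1 : A1 h δ δw B Bw Cw wmax) {z : SIdx n m → ℝ}
    (hz : inD wmax z) :
    equilibriumMap δ δw B Bw Cw z ≤ upperCorner wmax := by
  obtain ⟨hz0, hz1⟩ := inD_iff.1 hz
  have hb : ∀ p, 0 ≤ (BfM B Bw Cw *ᵥ z) p := mulVec_nonneg (bfM_nonneg hA1) hz0
  rintro (i | j)
  · have := hA1.delta_pos i
    have := hb (.inl i)
    exact div_le_one_of_le₀ (by linarith) (by linarith)
  · calc (BfM B Bw Cw *ᵥ z) (.inr j) / δw j ≤ (∑ k, Cw j k) / δw j := by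
          gcongr
          · exact (hA1.deltaw_pos j).le
          · rw [bfM_mulVec_inr]
            exact sum_le_sum fun k _ => mul_le_of_le_one_right (hA1.Cw_nonneg j k) (hz1 (.inl k))
      _ ≤ wmax := (hA1.ratio_mem j).2

lemma pos_of_isEquilibrium (hA1 : A1 h δ δw B Bw Cw wmax) (hA2 : Irred (BfM B Bw Cw))
    {z : SIdx n m → ℝ} (hz : 0 ≤ z) (hfix : IsEquilibrium δ δw B Bw Cw z) (hne : z ≠ 0)
    (p : SIdx n m) : 0 < z p := by
  by_contra hp
  obtain ⟨i, hi, j, hj, hij⟩ := hA2.exists_pos_apply (bfM_nonneg hA1)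
    (posSupport_nonempty hz hne) fun hU => hp (posSupport_eq_univ.1 hU p)
  have hzi : z i = 0 := le_antisymm (not_lt.1 (mt mem_posSupport.2 hi)) (hz i)
  have hpop : popPart z i = 0 := by rcases i with i | i <;> simp [popPart, hzi]
  have hb : (BfM B Bw Cw *ᵥ z) i = 0 := by simpa [hzi, hpop] using (hfix i).symm
  have := apply_mul_le_mulVec (bfM_nonneg hA1) hz i j
  have := mul_pos hij (mem_posSupport.1 hj)
  linarith

/-- Strict subhomogeneity of the equilibrium map: strictness appears first at the population
nodes, where `t ↦ t / (δ + t)` is strictly concave, and passes to the resource nodes through a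
positive entry of each row of `C_w`. -/
lemma smul_lt_of_smul_le (hA1 : A1 h δ δw B Bw Cw wmax) {y z : SIdx n m → ℝ}
    (hfy : equilibriumMap δ δw B Bw Cw y = y) (hfz : equilibriumMap δ δw B Bw Cw z = z)
    (hz : ∀ p, 0 < z p) {θ : ℝ} (hθ0 : 0 < θ) (hθ1 : θ < 1) (hθ : θ • z ≤ y) (p : SIdx n m) :
    θ * z p < y p := by
  have hBθ : θ • (BfM B Bw Cw *ᵥ z) ≤ BfM B Bw Cw *ᵥ y := by
    rw [← mulVec_smul]
    exact mulVec_mono (bfM_nonneg hA1) hθ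
  have hb : ∀ p, 0 ≤ (BfM B Bw Cw *ᵥ z) p :=
    mulVec_nonneg (bfM_nonneg hA1) fun p => (hz p).le
  have hpop : ∀ i, θ * z (.inl i) < y (.inl i) := fun i => by
    have hzi := congrFun hfz (.inl i)
    have hyi := congrFun hfy (.inl i)
    simp only [equilibriumMap, Sum.elim_inl] at hzi hyi
    set b := (BfM B Bw Cw *ᵥ z) (.inl i)
    set b' := (BfM B Bw Cw *ᵥ y) (.inl i)
    have hδ := hA1.delta_pos i
    have hbb' : θ * b ≤ b' := hBθ (.inl i)
    have hbpos : 0 < b := by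
      refine (hb (.inl i)).lt_of_ne fun h0 => ?_
      change 0 = b at h0
      have := hz (.inl i)
      rw [← hzi, ← h0, zero_div] at this
      exact this.false
    have hb'pos : 0 < b' := (mul_pos hθ0 hbpos).trans_le hbb'
    rw [← hzi, ← hyi, mul_div_assoc', div_lt_div_iff₀ (by linarith) (by linarith)]
    nlinarith [mul_nonneg hδ.le (sub_nonneg.2 hbb'), mul_pos (mul_pos hbpos hb'pos) (sub_pos.2 hθ1)]
  rcases p with i | j
  · exact hpop i
  · have hzj := congrFun hfz (.inr j)
    have hyj := congrFun hfy (.inr j)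
    simp only [equilibriumMap, Sum.elim_inr] at hzj hyj
    obtain ⟨k, hk⟩ := hA1.Cw_row_pos j
    rw [← hzj, ← hyj, mul_div_assoc']
    refine div_lt_div_of_pos_right ?_ (hA1.deltaw_pos j)
    rw [bfM_mulVec_inr, bfM_mulVec_inr, mul_sum]
    refine sum_lt_sum (fun l _ => ?_) ⟨k, mem_univ k, ?_⟩
    · rw [mul_left_comm]
      exact mul_le_mul_of_nonneg_left (hθ (.inl l)) (hA1.Cw_nonneg j l)
    · rw [mul_left_comm]
      exact mul_lt_mul_of_pos_left (hpop k) hk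

lemma le_of_equilibriumMap_eq (hA1 : A1 h δ δw B Bw Cw wmax) {y z : SIdx n m → ℝ}
    (hfy : equilibriumMap δ δw B Bw Cw y = y) (hfz : equilibriumMap δ δw B Bw Cw z = z)
    (hy : ∀ p, 0 < y p) (hz : ∀ p, 0 < z p) : z ≤ y := by
  cases isEmpty_or_nonempty (SIdx n m)
  · exact fun p => isEmptyElim p
  obtain ⟨p₀, hp₀⟩ := Finite.exists_min fun p => y p / z p
  set θ := y p₀ / z p₀
  have hθ : θ • z ≤ y := fun p => (le_div_iff₀ (hz p)).1 (hp₀ p)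
  rcases le_or_gt 1 θ with hθ1 | hθ1
  · exact fun p => (le_mul_of_one_le_left (hz p).le hθ1).trans (hθ p)
  · have := smul_lt_of_smul_le hA1 hfy hfz hz (div_pos (hy p₀) (hz p₀)) hθ1 hθ p₀
    rw [div_mul_cancel₀ _ (hz p₀).ne'] at this
    exact absurd this (lt_irrefl _)

lemma le_equilibriumMap_of_mulVec_eq (hA1 : A1 h δ δw B Bw Cw wmax) {c : ℝ} (hc : 0 < c)
    {u : SIdx n m → ℝ} (hu : ∀ p, 0 < u p)
    (hBu : ∀ p, (BfM B Bw Cw *ᵥ u) p = (c + Sum.elim δ δw p) * u p)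
    (hsmall : ∀ i, u (.inl i) * (c + δ i) ≤ c) : u ≤ equilibriumMap δ δw B Bw Cw u := by
  rintro (i | j)
  · have hδ := hA1.delta_pos i
    have hui := hu (.inl i)
    simp only [equilibriumMap, Sum.elim_inl, hBu]
    rw [le_div_iff₀ (by positivity)]
    nlinarith [hsmall i]
  · have hδw := hA1.deltaw_pos j
    have huj := hu (.inr j)
    simp only [equilibriumMap, Sum.elim_inr, hBu]
    rw [le_div_iff₀ hδw]
    nlinarith

lemma linMat_mulVec (z : SIdx n m → ℝ) (p : SIdx n m) :
    (linMat h δ δw B Bw Cw *ᵥ z) p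
      = z p - h * (Sum.elim δ δw p * z p) + h * (BfM B Bw Cw *ᵥ z) p := by
  simp [linMat, add_mulVec, sub_mulVec, smul_mulVec, DfM, mulVec_diagonal]

lemma mul_bfM_le_linMat (hA1 : A1 h δ δw B Bw Cw wmax) (p q : SIdx n m) :
    h * BfM B Bw Cw p q ≤ linMat h δ δw B Bw Cw p q := by
  have hhd : h * Sum.elim δ δw p ≤ 1 := by
    rcases p with i | j
    exacts [(hA1.h_delta i).2, (hA1.h_deltaw j).2]
  by_cases hpq : p = q
  · subst hpq
    simp only [Matrix.add_apply, DfM, Matrix.sub_apply, one_apply_eq, Matrix.smul_apply,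
      diagonal_apply_eq, smul_eq_mul, le_add_iff_nonneg_left, sub_nonneg]
    exact hhd
  · simp [DfM, one_apply_ne hpq, diagonal_apply_ne _ hpq]

lemma linMat_nonneg (hA1 : A1 h δ δw B Bw Cw wmax) (p q : SIdx n m) :
    0 ≤ linMat h δ δw B Bw Cw p q :=
  (mul_nonneg hA1.h_pos.le (bfM_nonneg hA1 p q)).trans (mul_bfM_le_linMat hA1 p q)

lemma linMat_irred (hA1 : A1 h δ δw B Bw Cw wmax) (hA2 : Irred (BfM B Bw Cw)) :
    Irred (linMat h δ δw B Bw Cw) :=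
  (hA2.smul hA1.h_pos.ne').mono (fun p q => mul_nonneg hA1.h_pos.le (bfM_nonneg hA1 p q))
    (mul_bfM_le_linMat hA1)

/-- Scaling down the Perron vector of `linMat` gives a positive subsolution of the
equilibrium map; Knaster–Tarski on the order interval between it and the top of `D` then
yields a fixed point. -/
lemma exists_pos_isEquilibrium (hA1 : A1 h δ δw B Bw Cw wmax) (hA2 : Irred (BfM B Bw Cw))
    (hρ : 1 < specRad (linMat h δ δw B Bw Cw)) :
    ∃ z, inD wmax z ∧ (∀ p, 0 < z p) ∧ IsEquilibrium δ δw B Bw Cw z := by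
  have := nonempty_of_pos_specRad (zero_lt_one.trans hρ)
  obtain ⟨v, hv, hAv, -⟩ := (linMat_irred hA1 hA2).perron_frobenius (linMat_nonneg hA1)
  have hh := hA1.h_pos
  set c := (specRad (linMat h δ δw B Bw Cw) - 1) / h with hc_def
  have hc : 0 < c := div_pos (by linarith) hh
  have hBv : ∀ p, (BfM B Bw Cw *ᵥ v) p = (c + Sum.elim δ δw p) * v p := fun p => by
    have := congrFun hAv p
    rw [linMat_mulVec, Pi.smul_apply, smul_eq_mul] at this
    rw [hc_def]
    field_simp
    linear_combination this
  set g : SIdx n m → ℝ := Sum.elim (fun i => min 1 (c / (c + δ i))) fun _ => wmax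
  have hg : ∀ p, 0 * v p < g p := by
    rintro (i | j)
    · have := hA1.delta_pos i
      show 0 * v (.inl i) < min 1 (c / (c + δ i))
      rw [zero_mul]
      exact lt_min one_pos (by positivity)
    · show 0 * v (.inr j) < wmax
      rw [zero_mul]
      exact hA1.wmax_pos
  obtain ⟨ε, hε, hεv⟩ := exists_gt_mul_le hg
  set u := ε • v
  have hu : ∀ p, 0 < u p := fun p => mul_pos hε (hv p)
  have hu_le : u ≤ upperCorner wmax := by
    rintro (i | j)
    · exact (hεv (.inl i)).trans (min_le_left _ _)
    · exact hεv (.inr j)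
  have hu_sub : u ≤ equilibriumMap δ δw B Bw Cw u := by
    refine le_equilibriumMap_of_mulVec_eq hA1 hc hu (fun p => ?_) fun i => ?_
    · rw [mulVec_smul, Pi.smul_apply, hBv, smul_eq_mul]
      change _ = _ * (ε * v p)
      ring
    · have := hA1.delta_pos i
      exact (le_div_iff₀ (by positivity)).1 ((hεv (.inl i)).trans (min_le_right _ _))
  have : Fact (u ≤ upperCorner wmax) := ⟨hu_le⟩
  let f : Set.Icc u (upperCorner wmax) →o Set.Icc u (upperCorner wmax) :=
    { toFun := fun z => ⟨equilibriumMap δ δw B Bw Cw z,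
        hu_sub.trans (equilibriumMap_mono hA1 (fun p => (hu p).le) z.2.1),
        equilibriumMap_le_upperCorner hA1 (inD_iff.2 ⟨fun p => (hu p).le.trans (z.2.1 p), z.2.2⟩)⟩
      monotone' := fun z z' hzz' =>
        equilibriumMap_mono hA1 (fun p => (hu p).le.trans (z.2.1 p)) hzz' }
  have hz0 : 0 ≤ f.lfp.1 := fun p => (hu p).le.trans (f.lfp.2.1 p)
  exact ⟨f.lfp, inD_iff.2 ⟨hz0, f.lfp.2.2⟩, fun p => (hu p).trans_le (f.lfp.2.1 p),
    (isEquilibrium_iff_equilibriumMap_eq hA1 hz0).2 (congrArg Subtype.val f.map_lfp)⟩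

lemma eq_of_isEquilibrium (hA1 : A1 h δ δw B Bw Cw wmax) (hA2 : Irred (BfM B Bw Cw))
    {y z : SIdx n m → ℝ} (hy : 0 ≤ y) (hfy : IsEquilibrium δ δw B Bw Cw y) (hy0 : y ≠ 0)
    (hz : ∀ p, 0 < z p) (hfz : IsEquilibrium δ δw B Bw Cw z) : y = z := by
  have hy := pos_of_isEquilibrium hA1 hA2 hy hfy hy0
  rw [isEquilibrium_iff_equilibriumMap_eq hA1 fun p => (hy p).le] at hfy
  rw [isEquilibrium_iff_equilibriumMap_eq hA1 fun p => (hz p).le] at hfz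
  exact le_antisymm (le_of_equilibriumMap_eq hA1 hfz hfy hz hy)
    (le_of_equilibriumMap_eq hA1 hfy hfz hy hz)

lemma linMat_mulVec_of_isEquilibrium {z : SIdx n m → ℝ} (hfix : IsEquilibrium δ δw B Bw Cw z)
    (p : SIdx n m) : (linMat h δ δw B Bw Cw *ᵥ z) p
      = z p + h * (popPart z p * (BfM B Bw Cw *ᵥ z) p) := by
  rw [linMat_mulVec, hfix p]
  ring

/-- At an endemic equilibrium `(I − hD_f + hB_f) z = z + h Z(z) B_f z ≥ z`, with strict
inequality at the population nodes, so Perron–Frobenius forces `ρ > 1`. -/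
lemma one_lt_specRad_of_isEquilibrium (hA1 : A1 h δ δw B Bw Cw wmax) (hA2 : Irred (BfM B Bw Cw))
    {z : SIdx n m → ℝ} (hz : 0 ≤ z) (hfix : IsEquilibrium δ δw B Bw Cw z) (hne : z ≠ 0) :
    1 < specRad (linMat h δ δw B Bw Cw) := by
  have hpos := pos_of_isEquilibrium hA1 hA2 hz hfix hne
  obtain ⟨q, -⟩ := Function.ne_iff.1 hne
  obtain ⟨i⟩ : Nonempty (Fin n) := by
    rcases q with i | j
    exacts [⟨i⟩, ⟨(hA1.Cw_row_pos j).choose⟩]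
  have hb : 0 < (BfM B Bw Cw *ᵥ z) (.inl i) := by
    refine (mulVec_nonneg (bfM_nonneg hA1) hz (.inl i)).lt_of_ne fun h0 => ?_
    have := hfix (.inl i)
    rw [← h0, Pi.zero_apply, mul_zero] at this
    exact (mul_pos (hA1.delta_pos i) (hpos (.inl i))).ne' this
  have : Nonempty (SIdx n m) := ⟨q⟩
  obtain ⟨-, -, -, hlt⟩ := (linMat_irred hA1 hA2).perron_frobenius (linMat_nonneg hA1)
  refine hlt 1 z hz (fun p => ?_) fun h1 => ?_
  · rw [Pi.smul_apply, one_smul, linMat_mulVec_of_isEquilibrium hfix]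
    have hpop : 0 ≤ popPart z p := by
      rcases p with i | j
      exacts [hz (.inl i), le_rfl]
    have := mul_nonneg hA1.h_pos.le (mul_nonneg hpop (mulVec_nonneg (bfM_nonneg hA1) hz p))
    linarith
  · have hi := congrFun h1 (.inl i)
    rw [Pi.smul_apply, one_smul, linMat_mulVec_of_isEquilibrium hfix] at hi
    have : 0 < h * (popPart z (.inl i) * (BfM B Bw Cw *ᵥ z) (.inl i)) :=
      mul_pos hA1.h_pos (mul_pos (hpos (.inl i)) hb)
    linarith

end SIWS

/-- if `ρ(I − hD_f + hB_f) > 1` the model has exactly two equilibria in `D`,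
the healthy state and a strictly positive endemic equilibrium; and the healthy state is the
unique equilibrium in `D` iff `ρ(I − hD_f + hB_f) ≤ 1`. -/
theorem stmt3 {n m : ℕ} (h wmax : ℝ) (δ : Fin n → ℝ) (δw : Fin m → ℝ)
    (B : Matrix (Fin n) (Fin n) ℝ) (Bw : Matrix (Fin n) (Fin m) ℝ)
    (Cw : Matrix (Fin m) (Fin n) ℝ)
    (hA1 : A1 h δ δw B Bw Cw wmax)
    (hA2 : Irred (BfM B Bw Cw)) :
    (1 < specRad (1 - h • DfM δ δw + h • BfM B Bw Cw) →
      ∃ zstar : SIdx n m → ℝ, inD wmax zstar ∧ (∀ p, 0 < zstar p) ∧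
        step h (DfM δ δw) (BfM B Bw Cw) zstar = zstar ∧
        ∀ y : SIdx n m → ℝ, inD wmax y → step h (DfM δ δw) (BfM B Bw Cw) y = y →
          y = 0 ∨ y = zstar) ∧
    ((∀ y : SIdx n m → ℝ, inD wmax y → step h (DfM δ δw) (BfM B Bw Cw) y = y → y = 0) ↔
      specRad (1 - h • DfM δ δw + h • BfM B Bw Cw) ≤ 1) := by
  have hh : h ≠ 0 := hA1.h_pos.ne'
  refine ⟨fun hρ => ?_, fun hall => le_of_not_gt fun hρ => ?_, fun hρ y hyD hfix => ?_⟩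
  · obtain ⟨z, hzD, hz, hfz⟩ := SIWS.exists_pos_isEquilibrium hA1 hA2 hρ
    refine ⟨z, hzD, hz, (SIWS.step_eq_self_iff hh z).2 hfz,
      fun y hyD hfix => or_iff_not_imp_left.2 fun hy0 => ?_⟩
    exact SIWS.eq_of_isEquilibrium hA1 hA2 (SIWS.inD_iff.1 hyD).1
      ((SIWS.step_eq_self_iff hh y).1 hfix) hy0 hz hfz
  · obtain ⟨z, hzD, hz, hfz⟩ := SIWS.exists_pos_isEquilibrium hA1 hA2 hρ
    have := nonempty_of_pos_specRad (zero_lt_one.trans hρ)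
    have hp := hz (Classical.arbitrary _)
    rw [hall z hzD ((SIWS.step_eq_self_iff hh z).2 hfz)] at hp
    exact hp.false
  · by_contra hy0
    exact hρ.not_gt (SIWS.one_lt_specRad_of_isEquilibrium hA1 hA2 (SIWS.inD_iff.1 hyD).1
      ((SIWS.step_eq_self_iff hh y).1 hfix) hy0)
end

section
/- Consider the time-invariant single-virus layered SIWS model under Assumptions A1, A2 and A3. Then ρ(D_f^{−1}B_f) > ρ(D^{−1}B); that is, the basic reproduction number ρ(D_f^{−1}B_f) of the layered networked SIWS model is strictly greater than the basic reproduction number ρ(D^{−1}B) of the networked SIS model with infection matrix B and healing matrix D = diag(δ_1,…,δ_n). -/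
open Matrix Filter

/-! The matrix `D⁻¹B` is the leading principal block of the nonnegative irreducible matrix
`D_f⁻¹B_f`, whose complementary block, indexed by the resource nodes, is nonempty. The moduli of
a complex eigenvector of `D⁻¹B` for an eigenvalue of maximal modulus form a vector `x ≥ 0` with
`ρ(D⁻¹B) x ≤ D⁻¹B x`; extended by zero it still satisfies `ρ(D⁻¹B) x ≤ D_f⁻¹B_f x`. The
Collatz–Wielandt bound, obtained from Gelfand's formula, gives `ρ(D⁻¹B) ≤ ρ(D_f⁻¹B_f)`. In case of
equality, irreducibility (some sum of powers of `D_f⁻¹B_f` is entrywise positive) forces the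
extended vector to be a positive eigenvector, which contradicts its zero entries. -/

open Finset

section SpectralRadius

variable {ι : Type} [Fintype ι] [DecidableEq ι]

attribute [local instance] Matrix.linftyOpNormedAddCommGroup Matrix.linftyOpNormedRing
  Matrix.linftyOpNormedAlgebra

lemma specRad_eq_sSup_image (M : Matrix ι ι ℝ) :
    specRad M = sSup ((‖·‖) '' spectrum ℂ (M.map Complex.ofReal)) := by
  simp only [specRad, Set.image, eq_comm]

lemma isCompact_norm_image_spectrum (M : Matrix ι ι ℝ) :
    IsCompact ((‖·‖) '' spectrum ℂ (M.map Complex.ofReal)) :=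
  (spectrum.isCompact _).image continuous_norm

lemma norm_le_specRad {M : Matrix ι ι ℝ} {μ : ℂ} (hμ : μ ∈ spectrum ℂ (M.map Complex.ofReal)) :
    ‖μ‖ ≤ specRad M := by
  rw [specRad_eq_sSup_image]
  exact le_csSup (isCompact_norm_image_spectrum M).bddAbove ⟨μ, hμ, rfl⟩

lemma exists_mem_spectrum_norm_eq_specRad [Nonempty ι] (M : Matrix ι ι ℝ) :
    ∃ μ ∈ spectrum ℂ (M.map Complex.ofReal), ‖μ‖ = specRad M := by
  rw [specRad_eq_sSup_image]
  exact (isCompact_norm_image_spectrum M).sSup_mem ((spectrum.nonempty _).image _)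

lemma specRad_nonneg (M : Matrix ι ι ℝ) : 0 ≤ specRad M :=
  Real.sSup_nonneg fun _ ⟨μ, _, h⟩ => h ▸ norm_nonneg μ

lemma spectralRadius_map_ofReal [Nonempty ι] (M : Matrix ι ι ℝ) :
    spectralRadius ℂ (M.map Complex.ofReal) = ENNReal.ofReal (specRad M) := by
  obtain ⟨μ, hμ, hμρ⟩ := exists_mem_spectrum_norm_eq_specRad M
  refine le_antisymm (iSup₂_le fun ν hν => ?_) ?_
  · rw [← enorm_eq_nnnorm, ← ofReal_norm]
    exact ENNReal.ofReal_le_ofReal (norm_le_specRad hν)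
  · rw [← hμρ, ofReal_norm, enorm_eq_nnnorm]
    exact le_iSup₂ (f := fun ν (_ : ν ∈ spectrum ℂ (M.map Complex.ofReal)) => (‖ν‖₊ : ENNReal))
      μ hμ

lemma norm_map_ofReal (M : Matrix ι ι ℝ) : ‖M.map Complex.ofReal‖ = ‖M‖ := by
  simp [Matrix.linfty_opNorm_def]

end SpectralRadius

lemma Matrix.exists_mulVec_eq_smul_of_mem_spectrum {ι K : Type*} [Fintype ι] [DecidableEq ι]
    [Field K] {A : Matrix ι ι K} {μ : K} (hμ : μ ∈ spectrum K A) : ∃ v ≠ 0, A *ᵥ v = μ • v := by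
  rw [← spectrum_toLin', ← Module.End.hasEigenvalue_iff_mem_spectrum] at hμ
  obtain ⟨v, hv, hv0⟩ := hμ.exists_hasEigenvector
  exact ⟨v, hv0, by simpa using Module.End.mem_eigenspace_iff.mp hv⟩

lemma ofReal_le_spectralRadius_of_le_norm_pow {A : Type*} [NormedRing A] [NormedAlgebra ℂ A]
    [CompleteSpace A] {a : A} {c t : ℝ} (hc : 0 ≤ c) (ht : 0 < t)
    (h : ∀ k : ℕ, c ^ k * t ≤ ‖a ^ k‖) : ENNReal.ofReal c ≤ spectralRadius ℂ a := by
  have hlim : Tendsto (fun k : ℕ => ENNReal.ofReal (c * t ^ (1 / (k : ℝ)))) atTop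
      (nhds (ENNReal.ofReal c)) := by
    have : Tendsto (fun k : ℕ => t ^ (1 / (k : ℝ))) atTop (nhds 1) := by
      simpa using tendsto_const_nhds.rpow tendsto_one_div_atTop_nhds_zero_nat (Or.inl ht.ne')
    have h1 := this.const_mul c
    rw [mul_one] at h1
    exact (ENNReal.continuous_ofReal.tendsto c).comp h1
  refine le_of_tendsto_of_tendsto hlim
    (spectrum.pow_norm_pow_one_div_tendsto_nhds_spectralRadius a) ?_
  filter_upwards [eventually_ne_atTop 0] with k hk
  refine ENNReal.ofReal_le_ofReal ?_
  calc c * t ^ (1 / (k : ℝ)) = (c ^ k * t) ^ (1 / (k : ℝ)) := by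
        rw [Real.mul_rpow (by positivity) ht.le, ← Real.rpow_natCast, ← Real.rpow_mul hc,
          mul_one_div_cancel (by exact_mod_cast hk), Real.rpow_one]
    _ ≤ ‖a ^ k‖ ^ (1 / (k : ℝ)) := by gcongr; exact h k

section Nonneg

variable {ι : Type} [Fintype ι] {M N : Matrix ι ι ℝ}

lemma mulVec_mono_of_nonneg {κ : Type} {A : Matrix κ ι ℝ} (hA : ∀ i j, 0 ≤ A i j) {x y : ι → ℝ}
    (hxy : x ≤ y) : A *ᵥ x ≤ A *ᵥ y :=
  fun i => sum_le_sum fun j _ => mul_le_mul_of_nonneg_left (hxy j) (hA i j)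

variable [DecidableEq ι]

lemma pow_apply_le_pow_apply (hM : ∀ i j, 0 ≤ M i j) (hMN : ∀ i j, M i j ≤ N i j) (k : ℕ)
    (i j : ι) : (M ^ k) i j ≤ (N ^ k) i j := by
  induction k generalizing j with
  | zero => rfl
  | succ k ih =>
    rw [pow_succ, pow_succ, mul_apply, mul_apply]
    exact sum_le_sum fun l _ => mul_le_mul (ih l) (hMN l j) (hM l j)
      ((pow_apply_nonneg hM k i l).trans (ih l))

lemma pow_smul_le_pow_mulVec (hM : ∀ i j, 0 ≤ M i j) {c : ℝ} (hc : 0 ≤ c) {x : ι → ℝ}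
    (h : c • x ≤ M *ᵥ x) (k : ℕ) : c ^ k • x ≤ (M ^ k) *ᵥ x := by
  induction k with
  | zero => simp
  | succ k ih =>
    calc c ^ (k + 1) • x = c • (c ^ k • x) := by rw [pow_succ', mul_smul]
      _ ≤ c • ((M ^ k) *ᵥ x) := smul_le_smul_of_nonneg_left ih hc
      _ = (M ^ k) *ᵥ (c • x) := (mulVec_smul _ _ _).symm
      _ ≤ (M ^ k) *ᵥ (M *ᵥ x) := mulVec_mono_of_nonneg (pow_apply_nonneg hM k) h
      _ = (M ^ (k + 1)) *ᵥ x := by rw [mulVec_mulVec, pow_succ]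

attribute [local instance] Matrix.linftyOpNormedAddCommGroup Matrix.linftyOpNormedRing
  Matrix.linftyOpNormedAlgebra

lemma le_specRad_of_smul_le_mulVec (hM : ∀ i j, 0 ≤ M i j) {x : ι → ℝ} (hx : 0 ≤ x)
    (hx0 : x ≠ 0) {c : ℝ} (h : c • x ≤ M *ᵥ x) : c ≤ specRad M := by
  rcases lt_or_ge c 0 with hc | hc
  · exact hc.le.trans (specRad_nonneg M)
  obtain ⟨i, hi⟩ := Function.ne_iff.mp hx0
  have : Nonempty ι := ⟨i⟩
  have hxi : 0 < x i := (hx i).lt_of_ne' hi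
  have hxnorm : 0 < ‖x‖ := norm_pos_iff.2 hx0
  rw [← ENNReal.ofReal_le_ofReal_iff (specRad_nonneg M), ← spectralRadius_map_ofReal]
  refine ofReal_le_spectralRadius_of_le_norm_pow hc (div_pos hxi hxnorm) fun k => ?_
  rw [show M.map Complex.ofReal ^ k = (M ^ k).map Complex.ofReal from
    (M.map_pow Complex.ofRealHom k).symm, norm_map_ofReal, mul_div_assoc', div_le_iff₀ hxnorm]
  calc c ^ k * x i ≤ ((M ^ k) *ᵥ x) i := pow_smul_le_pow_mulVec hM hc h k i
    _ ≤ ‖(M ^ k) *ᵥ x‖ := (Real.le_norm_self _).trans (norm_le_pi_norm _ i)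
    _ ≤ ‖M ^ k‖ * ‖x‖ := linfty_opNorm_mulVec _ _

lemma exists_nonneg_specRad_smul_le_mulVec [Nonempty ι] (hM : ∀ i j, 0 ≤ M i j) :
    ∃ x : ι → ℝ, 0 ≤ x ∧ x ≠ 0 ∧ specRad M • x ≤ M *ᵥ x := by
  obtain ⟨μ, hμ, hμρ⟩ := exists_mem_spectrum_norm_eq_specRad M
  obtain ⟨v, hv0, hv⟩ := exists_mulVec_eq_smul_of_mem_spectrum hμ
  refine ⟨fun i => ‖v i‖, fun i => norm_nonneg _,
    fun h => hv0 (funext fun i => norm_eq_zero.1 (congrFun h i)), fun i => ?_⟩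
  calc specRad M * ‖v i‖ = ‖(M.map Complex.ofReal *ᵥ v) i‖ := by
        rw [hv, Pi.smul_apply, smul_eq_mul, norm_mul, hμρ]
    _ ≤ ∑ j, ‖(M i j : ℂ) * v j‖ := norm_sum_le _ _
    _ = (M *ᵥ fun j => ‖v j‖) i := by
        simp [mulVec, dotProduct, abs_of_nonneg (hM i _)]

end Nonneg

lemma exists_pos_smul_le {ι : Type} [Finite ι] {v : ι → ℝ} (hv : ∀ i, 0 < v i) (w : ι → ℝ) :
    ∃ ε > (0 : ℝ), ε • w ≤ v := by
  have hsmall : ∀ i, ∀ᶠ ε in nhds (0 : ℝ), ε * w i ≤ v i := fun i =>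
    ((continuous_mul_const (w i)).tendsto' 0 0 (zero_mul _)).eventually (ge_mem_nhds (hv i))
  obtain ⟨ε, hε, h⟩ := (eventually_mem_nhdsWithin.and
    ((eventually_all.2 hsmall).filter_mono (nhdsWithin_le_nhds (s := Set.Ioi 0)))).exists
  exact ⟨ε, hε, h⟩

namespace Irred

variable {ι : Type} [Fintype ι] [DecidableEq ι] {M : Matrix ι ι ℝ}

lemma exists_sum_pow_mulVec_pos (hM : ∀ i j, 0 ≤ M i j) (hirr : Irred M) :
    ∃ K : ℕ, ∀ z : ι → ℝ, 0 ≤ z → z ≠ 0 → ∀ i, 0 < ((∑ k ∈ range K, M ^ k) *ᵥ z) i := by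
  have hpath : ∀ p : ι × ι, ∃ k : ℕ, 0 < (M ^ k) p.1 p.2 := fun ⟨i, j⟩ => by
    by_cases hij : i = j
    · exact ⟨0, by simp [hij]⟩
    · obtain ⟨k, hk⟩ := hirr i j hij
      exact ⟨k, (pow_apply_nonneg hM k i j).lt_of_ne' hk⟩
  choose len hlen using hpath
  refine ⟨univ.sup len + 1, fun z hz hz0 i => ?_⟩
  have hP : ∀ j, (∑ k ∈ range (univ.sup len + 1), M ^ k) i j
      = ∑ k ∈ range (univ.sup len + 1), (M ^ k) i j := fun j => by rw [Matrix.sum_apply]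
  obtain ⟨j, hj⟩ := Function.ne_iff.mp hz0
  have hPij : 0 < (∑ k ∈ range (univ.sup len + 1), M ^ k) i j := by
    rw [hP]
    refine sum_pos' (fun k _ => pow_apply_nonneg hM k i j) ⟨len (i, j), ?_, hlen (i, j)⟩
    exact mem_range.2 (Nat.lt_succ_of_le (le_sup (mem_univ (i, j))))
  refine sum_pos' (fun l _ => mul_nonneg ?_ (hz l))
    ⟨j, mem_univ j, mul_pos hPij ((hz j).lt_of_ne' hj)⟩
  exact (sum_nonneg fun k _ => pow_apply_nonneg hM k i l).trans_eq (hP l).symm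

lemma pow_mulVec_of_mulVec_eq_smul {x : ι → ℝ} {ρ : ℝ} (h : M *ᵥ x = ρ • x) (k : ℕ) :
    (M ^ k) *ᵥ x = ρ ^ k • x := by
  induction k with
  | zero => simp
  | succ k ih => rw [pow_succ', ← mulVec_mulVec, ih, mulVec_smul, h, smul_smul, pow_succ]

lemma pos_of_mulVec_eq_smul (hM : ∀ i j, 0 ≤ M i j) (hirr : Irred M) {x : ι → ℝ} (hx : 0 ≤ x)
    (hx0 : x ≠ 0) {ρ : ℝ} (h : M *ᵥ x = ρ • x) (i : ι) : 0 < x i := by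
  obtain ⟨K, hK⟩ := hirr.exists_sum_pow_mulVec_pos hM
  have hPx := hK x hx hx0 i
  rw [sum_mulVec, Finset.sum_apply] at hPx
  simp only [pow_mulVec_of_mulVec_eq_smul h, Pi.smul_apply, smul_eq_mul, ← sum_mul] at hPx
  exact (hx i).lt_of_ne' fun hxi => by simp [hxi] at hPx

lemma mulVec_eq_specRad_smul (hM : ∀ i j, 0 ≤ M i j) (hirr : Irred M) {x : ι → ℝ}
    (hx : 0 ≤ x) (hx0 : x ≠ 0) (h : specRad M • x ≤ M *ᵥ x) : M *ᵥ x = specRad M • x := by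
  obtain ⟨K, hK⟩ := hirr.exists_sum_pow_mulVec_pos hM
  set P := ∑ k ∈ range K, M ^ k
  by_contra hne
  set d := M *ᵥ x - specRad M • x
  have hPd := hK d (sub_nonneg.2 h) (sub_ne_zero.2 hne)
  set w := P *ᵥ x
  have hw := hK x hx hx0
  have hMw : M *ᵥ w = specRad M • w + P *ᵥ d := by
    have hMP : M * P = P * M := (Commute.sum_right _ _ _ fun k _ => Commute.self_pow M k).eq
    rw [mulVec_mulVec, hMP, ← mulVec_mulVec, ← add_sub_cancel (specRad M • x) (M *ᵥ x),
      mulVec_add, mulVec_smul]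
  -- a nonzero defect `d` would let `w = P x` beat the spectral radius by some `ε > 0`
  obtain ⟨ε, hε, hεw⟩ := exists_pos_smul_le hPd w
  have hw0 : w ≠ 0 := by
    obtain ⟨i, -⟩ := Function.ne_iff.mp hx0
    exact fun h0 => (hw i).ne' (congrFun h0 i)
  have := le_specRad_of_smul_le_mulVec hM (fun i => (hw i).le) hw0
    (show (specRad M + ε) • w ≤ M *ᵥ w by rw [hMw, add_smul]; exact add_le_add_right hεw _)
  linarith

lemma lt_specRad_of_smul_le_mulVec (hM : ∀ i j, 0 ≤ M i j) (hirr : Irred M) {x : ι → ℝ}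
    (hx : 0 ≤ x) (hx0 : x ≠ 0) {c : ℝ} (h : c • x ≤ M *ᵥ x) {i : ι} (hi : x i = 0) :
    c < specRad M := by
  refine (le_specRad_of_smul_le_mulVec hM hx hx0 h).lt_of_ne ?_
  rintro rfl
  exact (hirr.pos_of_mulVec_eq_smul hM hx hx0 (hirr.mulVec_eq_specRad_smul hM hx hx0 h) i).ne' hi

lemma diagonal_mul (hM : ∀ i j, 0 ≤ M i j) (hirr : Irred M) {d : ι → ℝ} (hd : ∀ i, 0 < d i) :
    Irred (diagonal d * M) := by
  intro i j hij
  obtain ⟨k, hk⟩ := hirr i j hij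
  have : Nonempty ι := ⟨i⟩
  obtain ⟨l, hl⟩ := Finite.exists_min d
  have hle := pow_apply_le_pow_apply (M := d l • M) (N := diagonal d * M)
    (fun a b => mul_nonneg (hd l).le (hM a b))
    (fun a b => by
      simpa [Matrix.diagonal_mul] using mul_le_mul_of_nonneg_right (hl a) (hM a b)) k i j
  refine ⟨k, (lt_of_lt_of_le ?_ hle).ne'⟩
  rw [smul_pow, Matrix.smul_apply, smul_eq_mul]
  exact mul_pos (pow_pos (hd l) k) ((pow_apply_nonneg hM k i j).lt_of_ne' hk)

end Irred

lemma specRad_lt_specRad_fromBlocks {ι κ : Type} [Fintype ι] [DecidableEq ι] [Fintype κ]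
    [DecidableEq κ] [Nonempty ι] [Nonempty κ] {T : Matrix ι ι ℝ} {U : Matrix ι κ ℝ}
    {V : Matrix κ ι ℝ} {W : Matrix κ κ ℝ} (hM : ∀ i j, 0 ≤ fromBlocks T U V W i j)
    (hirr : Irred (fromBlocks T U V W)) : specRad T < specRad (fromBlocks T U V W) := by
  obtain ⟨x, hx, hx0, hTx⟩ :=
    exists_nonneg_specRad_smul_le_mulVec (M := T) fun i j => hM (.inl i) (.inl j)
  refine hirr.lt_specRad_of_smul_le_mulVec hM (x := Sum.elim x 0)
    (i := .inr (Classical.arbitrary κ)) ?_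
    (fun h => hx0 (funext fun i => congrFun h (.inl i))) ?_ rfl
  · exact Sum.forall.2 ⟨hx, fun _ => le_rfl⟩
  · rw [fromBlocks_mulVec]
    refine Sum.forall.2 ⟨fun i => by simpa using hTx i, fun j => ?_⟩
    simpa using mulVec_mono_of_nonneg (A := V) (fun i j => hM (.inr i) (.inl j)) hx j

lemma inv_diagonal_of_ne_zero {ι K : Type*} [Fintype ι] [DecidableEq ι] [Field K] {d : ι → K}
    (hd : ∀ i, d i ≠ 0) : (diagonal d)⁻¹ = diagonal d⁻¹ :=
  inv_eq_left_inv (by simp [diagonal_mul_diagonal, hd])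

theorem stmt6_general {n m : ℕ} (hm : 0 < m) (h wmax : ℝ) (δ : Fin n → ℝ) (δw : Fin m → ℝ)
    (B : Matrix (Fin n) (Fin n) ℝ) (Bw : Matrix (Fin n) (Fin m) ℝ)
    (Cw : Matrix (Fin m) (Fin n) ℝ)
    (hA1 : A1 h δ δw B Bw Cw wmax)
    (hA2 : Irred (BfM B Bw Cw)) :
    specRad ((Matrix.diagonal δ)⁻¹ * B) < specRad ((DfM δ δw)⁻¹ * BfM B Bw Cw) := by
  obtain ⟨k, -⟩ := hA1.Cw_row_pos ⟨0, hm⟩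
  have : Nonempty (Fin n) := ⟨k⟩
  have : Nonempty (Fin m) := ⟨⟨0, hm⟩⟩
  have hδ : ∀ i, 0 < Sum.elim δ δw i := Sum.forall.2 ⟨hA1.delta_pos, hA1.deltaw_pos⟩
  have hBf : ∀ i j, 0 ≤ BfM B Bw Cw i j := by
    rintro (i | i) (j | j)
    exacts [hA1.B_nonneg i j, hA1.Bw_nonneg i j, hA1.Cw_nonneg i j, le_rfl]
  have hA : (DfM δ δw)⁻¹ * BfM B Bw Cw = diagonal (Sum.elim δ δw)⁻¹ * BfM B Bw Cw := by
    rw [DfM, inv_diagonal_of_ne_zero fun i => (hδ i).ne']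
  have hblocks : (DfM δ δw)⁻¹ * BfM B Bw Cw
      = fromBlocks ((diagonal δ)⁻¹ * B) (diagonal δ⁻¹ * Bw) (diagonal δw⁻¹ * Cw) 0 := by
    rw [hA, inv_diagonal_of_ne_zero fun i => (hA1.delta_pos i).ne', ← Sum.elim_inv_inv,
      ← fromBlocks_diagonal, BfM, fromBlocks_multiply]
    simp
  rw [hblocks]
  refine specRad_lt_specRad_fromBlocks (fun i j => ?_) ?_ <;> rw [← hblocks, hA]
  · rw [diagonal_mul]
    exact mul_nonneg (inv_nonneg.2 (hδ i).le) (hBf i j)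
  · exact hA2.diagonal_mul hBf fun i => inv_pos.2 (hδ i)

/-- the basic reproduction number of the layered SIWS model is strictly
greater than that of the networked SIS model. -/
theorem stmt6 {n m : ℕ} (hm : 0 < m) (h wmax : ℝ) (δ : Fin n → ℝ) (δw : Fin m → ℝ)
    (B : Matrix (Fin n) (Fin n) ℝ) (Bw : Matrix (Fin n) (Fin m) ℝ)
    (Cw : Matrix (Fin m) (Fin n) ℝ)
    (hA1 : A1 h δ δw B Bw Cw wmax)
    (hA2 : Irred (BfM B Bw Cw))
    (hA3 : A3 h δ B Bw wmax) :
    specRad ((Matrix.diagonal δ)⁻¹ * B) < specRad ((DfM δ δw)⁻¹ * BfM B Bw Cw) :=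
  stmt6_general hm h wmax δ δw B Bw Cw hA1 hA2
end

section
/- Consider the time-invariant single-virus layered SIWS model under Assumptions A1 and A2, with homogeneous parameters: β_{ij} = β and δ_i = δ for all i, j ∈ {1,…,n}, and δ^w_j = δ^w, β^w_{ij} = β, c^w_{ji} = c for all i ∈ {1,…,n}, j ∈ {1,…,m}; set ĉ = c/δ^w, and assume nβ(1 + mĉ) > δ. Then the endemic equilibrium of this homogeneous system is given by x*_i = 1 − δ/(nβ(1 + mĉ)) for all i ∈ {1,…,n} and w*_j = nĉ·(1 − δ/(nβ(1 + mĉ))) for all j ∈ {1,…,m}; i.e., this point is a fixed point of the dynamics with all entries strictly positive. -/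
open Matrix Filter

/-- The homogeneous endemic infection level `x* = 1 − δ/(nβ(1 + m ĉ))` with `ĉ = c/δ^w`. -/
noncomputable def homX (n m : ℕ) (β δ0 δw0 c : ℝ) : ℝ :=
  1 - δ0 / ((n : ℝ) * β * (1 + (m : ℝ) * (c / δw0)))

/-- The homogeneous endemic equilibrium `(x*, w*) = (x*, n ĉ x*)`. -/
noncomputable def homZ (n m : ℕ) (β δ0 δw0 c : ℝ) : SIdx n m → ℝ :=
  Sum.elim (fun _ => homX n m β δ0 δw0 c)
    (fun _ => (n : ℝ) * (c / δw0) * homX n m β δ0 δw0 c)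


/-!
With homogeneous parameters the right-hand side maps block-constant states to block-constant
states, so the fixed-point equations collapse to two scalar ones: `δ^w w = n c x` on the resource
layer and `δ x = (1 - x) (n β x + m β w)` on the population layer. The first gives `w = n ĉ x`, and
then the second reads `δ = (1 - x) n β (1 + m ĉ)`, which is solved by `x*`; it is positive exactly
when `n β (1 + m ĉ) > δ`.
-/

noncomputable def drift {n m : ℕ} (Dfm Bfm : Matrix (SIdx n m) (SIdx n m) ℝ)
    (z : SIdx n m → ℝ) : SIdx n m → ℝ :=
  (Dfm - (1 - Zm z) * Bfm) *ᵥ z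

theorem step_eq_self_of_drift_eq_zero {n m : ℕ} (h : ℝ) {Dfm Bfm : Matrix (SIdx n m) (SIdx n m) ℝ}
    {z : SIdx n m → ℝ} (hz : drift Dfm Bfm z = 0) : step h Dfm Bfm z = z := by
  simp [step, show (Dfm - (1 - Zm z) * Bfm) *ᵥ z = 0 from hz]

section Drift

variable {n m : ℕ} (δ : Fin n → ℝ) (δw : Fin m → ℝ) (B : Matrix (Fin n) (Fin n) ℝ)
  (Bw : Matrix (Fin n) (Fin m) ℝ) (Cw : Matrix (Fin m) (Fin n) ℝ) (z : SIdx n m → ℝ)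

theorem drift_inl (i : Fin n) :
    drift (DfM δ δw) (BfM B Bw Cw) z (Sum.inl i) =
      δ i * z (Sum.inl i) - (1 - z (Sum.inl i)) *
        ((B *ᵥ (z ∘ Sum.inl)) i + (Bw *ᵥ (z ∘ Sum.inr)) i) := by
  simp only [drift, DfM, Zm, BfM, sub_mulVec, ← mulVec_mulVec, fromBlocks_mulVec, zero_mulVec,
    add_zero, one_mulVec, Pi.sub_apply, mulVec_diagonal, Sum.elim_inl, Pi.add_apply, sub_right_inj]
  ring

theorem drift_inr (j : Fin m) :
    drift (DfM δ δw) (BfM B Bw Cw) z (Sum.inr j) =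
      δw j * z (Sum.inr j) - (Cw *ᵥ (z ∘ Sum.inl)) j := by
  simp [drift, sub_mulVec, ← mulVec_mulVec, BfM, fromBlocks_mulVec, DfM, Zm, mulVec_diagonal]

end Drift

theorem of_const_mulVec_const {ι κ α : Type*} [Fintype κ] [Semiring α] (a b : α) :
    (Matrix.of fun (_ : ι) (_ : κ) => a) *ᵥ (fun _ => b) = fun _ => Fintype.card κ * a * b := by
  ext
  simp [mulVec, dotProduct, mul_assoc]

section Homogeneous

variable {n m : ℕ} {β δ0 δw0 c : ℝ}

theorem homX_pos (hδ0 : 0 < δ0) (hgt : δ0 < (n : ℝ) * β * (1 + (m : ℝ) * (c / δw0))) :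
    0 < homX n m β δ0 δw0 c := by
  have hK : 0 < (n : ℝ) * β * (1 + (m : ℝ) * (c / δw0)) := hδ0.trans hgt
  rw [homX, sub_pos, div_lt_one hK]
  exact hgt

theorem delta_mul_homX_eq (hK : (n : ℝ) * β * (1 + (m : ℝ) * (c / δw0)) ≠ 0) :
    δ0 * homX n m β δ0 δw0 c = (1 - homX n m β δ0 δw0 c) *
      (n * β * homX n m β δ0 δw0 c + m * β * (n * (c / δw0) * homX n m β δ0 δw0 c)) := by
  have h1 : 1 - homX n m β δ0 δw0 c = δ0 / ((n : ℝ) * β * (1 + (m : ℝ) * (c / δw0))) := by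
    rw [homX]; ring
  calc δ0 * homX n m β δ0 δw0 c
      = δ0 / ((n : ℝ) * β * (1 + (m : ℝ) * (c / δw0))) *
          ((n : ℝ) * β * (1 + (m : ℝ) * (c / δw0))) * homX n m β δ0 δw0 c := by
        rw [div_mul_cancel₀ _ hK]
    _ = _ := by rw [← h1]; ring

end Homogeneous

theorem stmt8_general {n m : ℕ} (h wmax β δ0 δw0 c : ℝ)
    (hA1 : A1 h (fun _ : Fin n => δ0) (fun _ : Fin m => δw0)
      (Matrix.of fun _ _ => β) (Matrix.of fun _ _ => β) (Matrix.of fun _ _ => c) wmax)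
    (hgt : δ0 < (n : ℝ) * β * (1 + (m : ℝ) * (c / δw0))) :
    step h (DfM (fun _ : Fin n => δ0) (fun _ : Fin m => δw0))
        (BfM (Matrix.of fun _ _ => β) (Matrix.of fun _ _ => β) (Matrix.of fun _ _ => c))
        (homZ n m β δ0 δw0 c) = homZ n m β δ0 δw0 c ∧
      ∀ p, 0 < homZ n m β δ0 δw0 c p := by
  refine ⟨step_eq_self_of_drift_eq_zero h (funext fun p => ?_), fun p => ?_⟩
  · rcases p with i | j
    · have hK := ((hA1.delta_pos i).trans hgt).ne'
      rw [drift_inl, Pi.zero_apply, sub_eq_zero]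
      simpa [homZ, Function.comp_def, of_const_mulVec_const] using delta_mul_homX_eq hK
    · have hδw0 := (hA1.deltaw_pos j).ne'
      rw [drift_inr, Pi.zero_apply]
      simp only [homZ, Sum.elim_inr, Function.comp_def, Sum.elim_inl, of_const_mulVec_const,
        Fintype.card_fin]
      field_simp
      ring
  · rcases p with i | j
    · exact homX_pos (hA1.delta_pos i) hgt
    · obtain ⟨k, hck⟩ := hA1.Cw_row_pos j
      have hx := homX_pos (hA1.delta_pos k) hgt
      have hn : (0 : ℝ) < n := Nat.cast_pos.mpr k.pos
      have hc : 0 < c := hck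
      have hδw0 := hA1.deltaw_pos j
      simp only [homZ, Sum.elim_inr]
      positivity

/-- in the homogeneous case with `nβ(1 + m ĉ) > δ`, the point
`x*_i = 1 − δ/(nβ(1+mĉ))`, `w*_j = n ĉ x*` is a strictly positive fixed point of the
dynamics, i.e. the endemic equilibrium. -/
theorem stmt8 {n m : ℕ} (h wmax β δ0 δw0 c : ℝ)
    (hA1 : A1 h (fun _ : Fin n => δ0) (fun _ : Fin m => δw0)
      (Matrix.of fun _ _ => β) (Matrix.of fun _ _ => β) (Matrix.of fun _ _ => c) wmax)
    (hA2 : Irred (BfM (n := n) (m := m) (Matrix.of fun _ _ => β)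
      (Matrix.of fun _ _ => β) (Matrix.of fun _ _ => c)))
    (hgt : δ0 < (n : ℝ) * β * (1 + (m : ℝ) * (c / δw0))) :
    step h (DfM (fun _ : Fin n => δ0) (fun _ : Fin m => δw0))
        (BfM (Matrix.of fun _ _ => β) (Matrix.of fun _ _ => β) (Matrix.of fun _ _ => c))
        (homZ n m β δ0 δw0 c) = homZ n m β δ0 δw0 c ∧
      ∀ p, 0 < homZ n m β δ0 δw0 c p :=
  stmt8_general h wmax β δ0 δw0 c hA1 hgt
end

section
/- Consider the time-invariant multi-virus layered SIWS model under Assumption B1. Then for all t ≥ 0, all k ∈ {1,…,l}, all i ∈ {1,…,n} and all j ∈ {1,…,m}: x^k_i(t) ∈ [0,1], w^k_j(t) ∈ [0, w^k_max], and Σ_{a=1}^l x^a_i(t) ∈ [0,1]; in particular the set E is positively invariant. -/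
open Matrix Filter

/-- One step of the multi-virus SIWS dynamics for all viruses simultaneously:
`z^k ↦ z^k − h (D_f^k − (I − Σ_a Z(z^a)) B_f^k) z^k`. -/
noncomputable def mstep {l n m : ℕ} (h : ℝ)
    (Dfm Bfm : Fin l → Matrix (SIdx n m) (SIdx n m) ℝ)
    (z : Fin l → SIdx n m → ℝ) : Fin l → SIdx n m → ℝ :=
  fun k => z k - h • ((Dfm k - (1 - ∑ a, Zm (z a)) * Bfm k).mulVec (z k))

/-- The multi-virus system domain `E`. -/
def inE {l n m : ℕ} (wmax : Fin l → ℝ) (z : Fin l → SIdx n m → ℝ) : Prop :=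
  (∀ k, (∀ i : Fin n, z k (Sum.inl i) ∈ Set.Icc (0 : ℝ) 1) ∧
    ∀ j : Fin m, z k (Sum.inr j) ∈ Set.Icc (0 : ℝ) (wmax k)) ∧
  ∀ i : Fin n, (∑ k, z k (Sum.inl i)) ≤ 1

/-- Assumption B1 (parameter part) on the multi-virus SIWS model. -/
structure B1 {l n m : ℕ} (h : ℝ) (δ : Fin l → Fin n → ℝ) (δw : Fin l → Fin m → ℝ)
    (B : Fin l → Matrix (Fin n) (Fin n) ℝ) (Bw : Fin l → Matrix (Fin n) (Fin m) ℝ)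
    (Cw : Fin l → Matrix (Fin m) (Fin n) ℝ) (wmax : Fin l → ℝ) : Prop where
  h_pos : 0 < h
  delta_pos : ∀ k i, 0 < δ k i
  deltaw_pos : ∀ k j, 0 < δw k j
  B_nonneg : ∀ k i j, 0 ≤ B k i j
  Bw_nonneg : ∀ k i j, 0 ≤ Bw k i j
  Cw_nonneg : ∀ k j i, 0 ≤ Cw k j i
  Cw_row_pos : ∀ k j, ∃ i, 0 < Cw k j i
  wmax_pos : ∀ k, 0 < wmax k
  ratio_mem : ∀ k j, (∑ i, Cw k j i) / δw k j ∈ Set.Icc (0 : ℝ) (wmax k)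
  h_delta : ∀ k i, h * δ k i ∈ Set.Ioc (0 : ℝ) 1
  h_deltaw : ∀ k j, h * δw k j ∈ Set.Ioc (0 : ℝ) 1
  h_beta : ∀ i : Fin n,
    h * (∑ k, ((∑ j, B k i j) + ∑ j, Bw k i j * wmax k)) ∈ Set.Icc (0 : ℝ) 1

/-- Assumption B3: `h(δ^k_i + Σ_j β^k_{ij} + Σ_j β^{wk}_{ij} w^k_max) ∈ [0,1]` for all `i, k`. -/
def B3 {l n m : ℕ} (h : ℝ) (δ : Fin l → Fin n → ℝ) (B : Fin l → Matrix (Fin n) (Fin n) ℝ)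
    (Bw : Fin l → Matrix (Fin n) (Fin m) ℝ) (wmax : Fin l → ℝ) : Prop :=
  ∀ k i, h * (δ k i + (∑ j, B k i j) + ∑ j, Bw k i j * wmax k) ∈ Set.Icc (0 : ℝ) 1

/-!
Each update is a nonnegative combination of the current state. The population coordinate of
virus `k` at node `i` becomes `(1 - hδ) x + h (1 - S) f`, where `S` is the total infection of
node `i` and `0 ≤ f ≤ Σ_j β_{ij} + Σ_j β^w_{ij} w_max`; so it stays nonnegative, and summing
over the viruses gives `S' ≤ S + h (1 - S) Σ_k (Σ_j β^k_{ij} + Σ_j β^{wk}_{ij} w^k_max) ≤ 1`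
by the step-size condition of B1. The resource coordinate becomes the convex combination
`(1 - hδ^w) w + hδ^w (Σ_i c_{ji} x_i / δ^w)` of two points of `[0, w_max]`.
-/

section Coordinates

variable {l n m : ℕ}

lemma one_sub_sum_Zm (z : Fin l → SIdx n m → ℝ) :
    1 - ∑ a, Zm (z a) = diagonal (Sum.elim (fun i => 1 - ∑ a, z a (Sum.inl i)) fun _ => 1) := by
  ext x y
  rcases eq_or_ne x y with rfl | hxy
  · cases x <;> simp [Zm, Matrix.sum_apply]
  · simp [Zm, Matrix.sum_apply, diagonal_apply_ne _ hxy, one_apply_ne hxy]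

lemma mstep_apply_inl (h : ℝ) (Dfm Bfm : Fin l → Matrix (SIdx n m) (SIdx n m) ℝ)
    (z : Fin l → SIdx n m → ℝ) (k : Fin l) (i : Fin n) :
    mstep h Dfm Bfm z k (Sum.inl i) = z k (Sum.inl i) - h * ((Dfm k *ᵥ z k) (Sum.inl i)
      - (1 - ∑ a, z a (Sum.inl i)) * (Bfm k *ᵥ z k) (Sum.inl i)) := by
  simp [mstep, sub_mulVec, ← mulVec_mulVec, one_sub_sum_Zm, mulVec_diagonal]

lemma mstep_apply_inr (h : ℝ) (Dfm Bfm : Fin l → Matrix (SIdx n m) (SIdx n m) ℝ)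
    (z : Fin l → SIdx n m → ℝ) (k : Fin l) (j : Fin m) :
    mstep h Dfm Bfm z k (Sum.inr j) =
      z k (Sum.inr j) - h * ((Dfm k *ᵥ z k) (Sum.inr j) - (Bfm k *ᵥ z k) (Sum.inr j)) := by
  simp [mstep, sub_mulVec, ← mulVec_mulVec, one_sub_sum_Zm, mulVec_diagonal]

lemma DfM_mulVec_inl (δ : Fin n → ℝ) (δw : Fin m → ℝ) (v : SIdx n m → ℝ) (i : Fin n) :
    (DfM δ δw *ᵥ v) (Sum.inl i) = δ i * v (Sum.inl i) := by
  simp [DfM, mulVec_diagonal]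

lemma DfM_mulVec_inr (δ : Fin n → ℝ) (δw : Fin m → ℝ) (v : SIdx n m → ℝ) (j : Fin m) :
    (DfM δ δw *ᵥ v) (Sum.inr j) = δw j * v (Sum.inr j) := by
  simp [DfM, mulVec_diagonal]

lemma BfM_mulVec_inl (B : Matrix (Fin n) (Fin n) ℝ) (Bw : Matrix (Fin n) (Fin m) ℝ)
    (Cw : Matrix (Fin m) (Fin n) ℝ) (v : SIdx n m → ℝ) (i : Fin n) :
    (BfM B Bw Cw *ᵥ v) (Sum.inl i) = ∑ j, B i j * v (Sum.inl j) + ∑ j, Bw i j * v (Sum.inr j) := by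
  simp [BfM, mulVec, dotProduct, Fintype.sum_sum_type]

lemma BfM_mulVec_inr (B : Matrix (Fin n) (Fin n) ℝ) (Bw : Matrix (Fin n) (Fin m) ℝ)
    (Cw : Matrix (Fin m) (Fin n) ℝ) (v : SIdx n m → ℝ) (j : Fin m) :
    (BfM B Bw Cw *ᵥ v) (Sum.inr j) = ∑ i, Cw j i * v (Sum.inl i) := by
  simp [BfM, mulVec, dotProduct, Fintype.sum_sum_type]

end Coordinates

section Bounds

variable {n m : ℕ} {B : Matrix (Fin n) (Fin n) ℝ} {Bw : Matrix (Fin n) (Fin m) ℝ}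
  {Cw : Matrix (Fin m) (Fin n) ℝ} {wmax : ℝ} {v : SIdx n m → ℝ}

lemma BfM_mulVec_inl_mem_Icc (hB : ∀ i j, 0 ≤ B i j) (hBw : ∀ i j, 0 ≤ Bw i j)
    (hv : inD wmax v) (i : Fin n) :
    (BfM B Bw Cw *ᵥ v) (Sum.inl i) ∈ Set.Icc 0 (∑ j, B i j + ∑ j, Bw i j * wmax) := by
  rw [BfM_mulVec_inl]
  refine ⟨add_nonneg ?_ ?_, add_le_add ?_ ?_⟩
  · exact Finset.sum_nonneg fun j _ => mul_nonneg (hB i j) (hv.1 j).1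
  · exact Finset.sum_nonneg fun j _ => mul_nonneg (hBw i j) (hv.2 j).1
  · exact Finset.sum_le_sum fun j _ => mul_le_of_le_one_right (hB i j) (hv.1 j).2
  · exact Finset.sum_le_sum fun j _ => mul_le_mul_of_nonneg_left (hv.2 j).2 (hBw i j)

lemma BfM_mulVec_inr_mem_Icc (hCw : ∀ j i, 0 ≤ Cw j i) (hv : inD wmax v) (j : Fin m) :
    (BfM B Bw Cw *ᵥ v) (Sum.inr j) ∈ Set.Icc 0 (∑ i, Cw j i) := by
  rw [BfM_mulVec_inr]
  exact ⟨Finset.sum_nonneg fun i _ => mul_nonneg (hCw j i) (hv.1 i).1,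
    Finset.sum_le_sum fun i _ => mul_le_of_le_one_right (hCw j i) (hv.1 i).2⟩

end Bounds

section Invariance

variable {l n m : ℕ} {h : ℝ} {δ : Fin l → Fin n → ℝ} {δw : Fin l → Fin m → ℝ}
  {B : Fin l → Matrix (Fin n) (Fin n) ℝ} {Bw : Fin l → Matrix (Fin n) (Fin m) ℝ}
  {Cw : Fin l → Matrix (Fin m) (Fin n) ℝ} {wmax : Fin l → ℝ} {z : Fin l → SIdx n m → ℝ}

local notation "Φ" => mstep h (fun k => DfM (δ k) (δw k)) (fun k => BfM (B k) (Bw k) (Cw k))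

lemma mstep_inl_eq (k : Fin l) (i : Fin n) :
    Φ z k (Sum.inl i) = (1 - h * δ k i) * z k (Sum.inl i)
      + h * (1 - ∑ a, z a (Sum.inl i)) * (BfM (B k) (Bw k) (Cw k) *ᵥ z k) (Sum.inl i) := by
  rw [mstep_apply_inl, DfM_mulVec_inl]
  ring

lemma mstep_inr_eq (k : Fin l) (j : Fin m) :
    Φ z k (Sum.inr j) = (1 - h * δw k j) * z k (Sum.inr j)
      + h * (BfM (B k) (Bw k) (Cw k) *ᵥ z k) (Sum.inr j) := by
  rw [mstep_apply_inr, DfM_mulVec_inr]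
  ring

lemma mstep_inl_nonneg (hB1 : B1 h δ δw B Bw Cw wmax) (hz : inE wmax z) (k : Fin l)
    (i : Fin n) : 0 ≤ Φ z k (Sum.inl i) := by
  rw [mstep_inl_eq]
  have hf :=
    (BfM_mulVec_inl_mem_Icc (Cw := Cw k) (hB1.B_nonneg k) (hB1.Bw_nonneg k) (hz.1 k) i).1
  have hS : 0 ≤ 1 - ∑ a, z a (Sum.inl i) := sub_nonneg.2 (hz.2 i)
  have hδ : 0 ≤ 1 - h * δ k i := sub_nonneg.2 (hB1.h_delta k i).2
  exact add_nonneg (mul_nonneg hδ ((hz.1 k).1 i).1)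
    (mul_nonneg (mul_nonneg hB1.h_pos.le hS) hf)

lemma sum_mstep_inl_le_one (hB1 : B1 h δ δw B Bw Cw wmax) (hz : inE wmax z) (i : Fin n) :
    ∑ k, Φ z k (Sum.inl i) ≤ 1 := by
  set S := ∑ a, z a (Sum.inl i) with hSdef
  have hS : 0 ≤ 1 - S := sub_nonneg.2 (hz.2 i)
  have hstep : ∀ k, Φ z k (Sum.inl i) ≤
      z k (Sum.inl i) + h * (1 - S) * (∑ j, B k i j + ∑ j, Bw k i j * wmax k) := fun k => by
    rw [mstep_inl_eq, ← hSdef]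
    have hf :=
      (BfM_mulVec_inl_mem_Icc (Cw := Cw k) (hB1.B_nonneg k) (hB1.Bw_nonneg k) (hz.1 k) i).2
    have hδx : 0 ≤ h * δ k i * z k (Sum.inl i) :=
      mul_nonneg (hB1.h_delta k i).1.le ((hz.1 k).1 i).1
    nlinarith [mul_le_mul_of_nonneg_left hf (mul_nonneg hB1.h_pos.le hS)]
  have hβ := (hB1.h_beta i).2
  calc ∑ k, Φ z k (Sum.inl i)
      ≤ ∑ k, (z k (Sum.inl i) + h * (1 - S) * (∑ j, B k i j + ∑ j, Bw k i j * wmax k)) :=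
        Finset.sum_le_sum fun k _ => hstep k
    _ = S + (1 - S) * (h * ∑ k, (∑ j, B k i j + ∑ j, Bw k i j * wmax k)) := by
        rw [Finset.sum_add_distrib, ← Finset.mul_sum, ← hSdef]
        ring
    _ ≤ S + (1 - S) * 1 := by gcongr
    _ = 1 := by ring

lemma mstep_inr_mem_Icc (hB1 : B1 h δ δw B Bw Cw wmax) (hz : inE wmax z) (k : Fin l)
    (j : Fin m) : Φ z k (Sum.inr j) ∈ Set.Icc 0 (wmax k) := by
  rw [mstep_inr_eq]
  have hc := BfM_mulVec_inr_mem_Icc (B := B k) (Bw := Bw k) (hB1.Cw_nonneg k) (hz.1 k) j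
  have hCw : ∑ i, Cw k j i ≤ δw k j * wmax k :=
    (div_le_iff₀' (hB1.deltaw_pos k j)).1 (hB1.ratio_mem k j).2
  have hδ := hB1.h_deltaw k j
  have hw := (hz.1 k).2 j
  have hh := hB1.h_pos.le
  constructor
  · nlinarith [mul_nonneg hh hc.1, mul_nonneg hw.1 (sub_nonneg.2 hδ.2)]
  · nlinarith [mul_le_mul_of_nonneg_left (hc.2.trans hCw) hh,
      mul_le_mul_of_nonneg_left hw.2 (sub_nonneg.2 hδ.2)]

theorem mstep_mem_inE (hB1 : B1 h δ δw B Bw Cw wmax) (hz : inE wmax z) : inE wmax (Φ z) :=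
  ⟨fun k => ⟨fun i => ⟨mstep_inl_nonneg hB1 hz k i,
      (Finset.single_le_sum (fun a _ => mstep_inl_nonneg hB1 hz a i) (Finset.mem_univ k)).trans
        (sum_mstep_inl_le_one hB1 hz i)⟩,
    mstep_inr_mem_Icc hB1 hz k⟩, sum_mstep_inl_le_one hB1 hz⟩

end Invariance

/-- positive invariance for the multi-virus model: all infection levels stay
in `[0,1]`, all contamination levels stay in `[0, w^k_max]`, and the total infection level
of each node stays in `[0,1]`; i.e. `E` is positively invariant. -/
theorem stmt13 {l n m : ℕ} (h : ℝ) (δ : Fin l → Fin n → ℝ) (δw : Fin l → Fin m → ℝ)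
    (B : Fin l → Matrix (Fin n) (Fin n) ℝ) (Bw : Fin l → Matrix (Fin n) (Fin m) ℝ)
    (Cw : Fin l → Matrix (Fin m) (Fin n) ℝ) (wmax : Fin l → ℝ)
    (hB1 : B1 h δ δw B Bw Cw wmax)
    (z : ℕ → Fin l → SIdx n m → ℝ)
    (hx0 : ∀ k i, z 0 k (Sum.inl i) ∈ Set.Icc (0 : ℝ) 1)
    (hsum0 : ∀ i, (∑ k, z 0 k (Sum.inl i)) ∈ Set.Icc (0 : ℝ) 1)
    (hw0 : ∀ k j, z 0 k (Sum.inr j) ∈ Set.Icc (0 : ℝ) (wmax k))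
    (hdyn : ∀ t, z (t + 1) =
      mstep h (fun k => DfM (δ k) (δw k)) (fun k => BfM (B k) (Bw k) (Cw k)) (z t)) :
    ∀ t, (∀ k, (∀ i, z t k (Sum.inl i) ∈ Set.Icc (0 : ℝ) 1) ∧
        ∀ j, z t k (Sum.inr j) ∈ Set.Icc (0 : ℝ) (wmax k)) ∧
      ∀ i, (∑ k, z t k (Sum.inl i)) ∈ Set.Icc (0 : ℝ) 1 := by
  have hE : ∀ t, inE wmax (z t) := by
    intro t
    induction t with
    | zero => exact ⟨fun k => ⟨hx0 k, hw0 k⟩, fun i => (hsum0 i).2⟩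
    | succ t ih => exact hdyn t ▸ mstep_mem_inE hB1 ih
  intro t
  exact ⟨(hE t).1, fun i =>
    ⟨Finset.sum_nonneg fun k _ => ((hE t).1 k).1 i |>.1, (hE t).2 i⟩⟩
end
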